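/- arXiv:1506.04124 — 7 statements merged into one kernel-verified Lean document; each statement's English description precedes it below -/
import Mathlib

section
/- Let z₀ ∈ ℂ, N₀ ∈ ℕ with N₀ > 1, ε₀ ∈ (0,1), and reals 1 < μ₀ < M₀. If a and A both lie in {z ∈ ℂ : |z^{N₀}·z₀ − 1| < ε₀} ∩ [μ₀, M₀] with a < A, then A − a < M₀·(((1+ε₀)/(1−ε₀))^{1/N₀} − 1). -/
/-!
If `‖x ^ N * z - 1‖ < ε` and `‖y ^ N * z - 1‖ < ε`, then `‖x‖ ^ N ‖z‖` and `‖y‖ ^ N ‖z‖` both lie in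
`(1 - ε, 1 + ε)`, so `(‖y‖ / ‖x‖) ^ N < (1 + ε) / (1 - ε)`. Taking `N`-th roots gives
`A ≤ |A| < t a` with `t = ((1 + ε) / (1 - ε)) ^ (1 / N) ≥ 1`, and `a ≤ M₀` turns
`A - a < (t - 1) a` into the claim.
-/

theorem norm_pow_mul_sub_lt_mul_norm_pow {𝕜 : Type*} [NormedDivisionRing 𝕜] {x y z : 𝕜} {N : ℕ}
    {ε : ℝ} (hε : ε < 1) (hx : ‖x ^ N * z - 1‖ < ε) (hy : ‖y ^ N * z - 1‖ < ε) :
    ‖y‖ ^ N * (1 - ε) < (1 + ε) * ‖x‖ ^ N := by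
  have hx_lower : 1 - ε < ‖x‖ ^ N * ‖z‖ := by
    have := norm_sub_norm_le (1 : 𝕜) (x ^ N * z)
    rw [norm_one, norm_sub_rev, norm_mul, norm_pow] at this
    linarith
  have hy_upper : ‖y‖ ^ N * ‖z‖ < 1 + ε := by
    have := norm_sub_norm_le (y ^ N * z) 1
    rw [norm_one, norm_mul, norm_pow] at this
    linarith
  have hε_pos : 0 < ε := (norm_nonneg _).trans_lt hx
  refine lt_of_mul_lt_mul_right ?_ (norm_nonneg z)
  calc ‖y‖ ^ N * (1 - ε) * ‖z‖ = ‖y‖ ^ N * ‖z‖ * (1 - ε) := by ring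
    _ < (1 + ε) * (1 - ε) := by gcongr
    _ < (1 + ε) * (‖x‖ ^ N * ‖z‖) := by gcongr
    _ = (1 + ε) * ‖x‖ ^ N * ‖z‖ := by ring

theorem Real.lt_rpow_inv_natCast_mul_of_pow_lt {u v q : ℝ} {N : ℕ} (hN : N ≠ 0) (hu : 0 ≤ u)
    (hv : 0 < v) (h : u ^ N < q * v ^ N) : u < q ^ ((1 : ℝ) / N) * v := by
  have hq : 0 ≤ q := nonneg_of_mul_nonneg_left ((pow_nonneg hu N).trans h.le) (pow_pos hv N)
  rw [← div_lt_iff₀ hv, one_div, Real.lt_rpow_inv_iff_of_pos (div_nonneg hu hv.le) hq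
    (by positivity), Real.rpow_natCast, div_pow, div_lt_iff₀ (pow_pos hv N)]
  exact h

theorem stmt_1_general (z₀ : ℂ) (N₀ : ℕ) (hN₀ : 1 < N₀) (ε₀ : ℝ) (hε₀ : ε₀ ∈ Set.Ioo (0:ℝ) 1)
    (μ₀ M₀ : ℝ) (hμ₀ : 1 < μ₀) (a A : ℝ)
    (ha : a ∈ Set.Icc μ₀ M₀)
    (ha' : ‖(a:ℂ) ^ N₀ * z₀ - 1‖ < ε₀)
    (hA' : ‖(A:ℂ) ^ N₀ * z₀ - 1‖ < ε₀) :
    A - a < M₀ * (((1 + ε₀) / (1 - ε₀)) ^ ((1:ℝ) / N₀) - 1) := by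
  obtain ⟨hε_pos, hε_lt_one⟩ := hε₀
  have ha_pos : 0 < a := by linarith [ha.1]
  set t := ((1 + ε₀) / (1 - ε₀)) ^ ((1:ℝ) / N₀)
  have ht : 1 ≤ t :=
    Real.one_le_rpow ((one_le_div (by linarith)).2 (by linarith)) (by positivity)
  have hA_lt : ‖A‖ < t * a := by
    refine Real.lt_rpow_inv_natCast_mul_of_pow_lt (by omega) (norm_nonneg _) ha_pos ?_
    have := norm_pow_mul_sub_lt_mul_norm_pow hε_lt_one ha' hA'
    rw [Complex.norm_real, Complex.norm_real, Real.norm_of_nonneg ha_pos.le] at this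
    rwa [div_mul_eq_mul_div, lt_div_iff₀ (by linarith)]
  calc A - a ≤ ‖A‖ - a := by linarith [Real.le_norm_self A]
    _ < (t - 1) * a := by linarith
    _ ≤ M₀ * (t - 1) := by nlinarith [ha.2]

theorem stmt_1 (z₀ : ℂ) (N₀ : ℕ) (hN₀ : 1 < N₀) (ε₀ : ℝ) (hε₀ : ε₀ ∈ Set.Ioo (0:ℝ) 1)
    (μ₀ M₀ : ℝ) (hμ₀ : 1 < μ₀) (hM₀ : μ₀ < M₀) (a A : ℝ)
    (ha : a ∈ Set.Icc μ₀ M₀) (hA : A ∈ Set.Icc μ₀ M₀)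
    (ha' : ‖(a:ℂ) ^ N₀ * z₀ - 1‖ < ε₀)
    (hA' : ‖(A:ℂ) ^ N₀ * z₀ - 1‖ < ε₀)
    (haA : a < A) :
    A - a < M₀ * (((1 + ε₀) / (1 - ε₀)) ^ ((1:ℝ) / N₀) - 1) :=
  stmt_1_general z₀ N₀ hN₀ ε₀ hε₀ μ₀ M₀ hμ₀ a A ha ha' hA'
end

section
/- Let (kₙ) be a strictly increasing sequence of positive integers with ∑ 1/kₙ < ∞, and let B be the backward shift on ℓ², B(x₁,x₂,x₃,…) = (x₂,x₃,…). Then for any reals 1 < μ₀ < M₀, there is no x ∈ ℓ² such that for every λ ∈ [μ₀, M₀] the set {(λB)^{kₙ}(x) : n ∈ ℕ} is dense in ℓ². In particular ⋂_{λ ∈ (1,∞)} HC({(λB)^{kₙ}}) = ∅. -/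
/-!
Fix a vector `x` and write `λ = exp t`. The zeroth coordinate of `(λB)^{kₙ} x` is
`exp (kₙ t) xₖₙ`, so if the orbit is dense then `|exp (kₙ t) xₖₙ| ∈ (1, 2)` for infinitely many `n`.
For each fixed `n` this confines `t` to an interval of length `log 2 / kₙ`, and since `∑ 1/kₙ < ∞`
the Borel–Cantelli lemma shows that almost no `t` satisfies it infinitely often. Hence `x` cannot
have dense orbits for all `λ` in an interval of positive length.
-/

open MeasureTheory Filter Set Topology Real
open scoped ENNReal

instance lp.instNontrivial {α : Type*} [Nonempty α] {E : α → Type*}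
    [∀ i, NormedAddCommGroup (E i)] [∀ i, Nontrivial (E i)] {p : ℝ≥0∞} :
    Nontrivial (lp E p) := by
  classical
  inhabit α
  obtain ⟨a, ha⟩ := exists_ne (0 : E default)
  exact ⟨lp.single p default a, 0, fun h => ha (by simpa using congr($h default))⟩

theorem DenseRange.frequently_mem {X : Type*} [TopologicalSpace X] [T1Space X]
    [∀ x : X, NeBot (𝓝[≠] x)] {u : ℕ → X} (hu : DenseRange u) {U : Set X} (hU : IsOpen U)
    (hne : U.Nonempty) : ∃ᶠ n in atTop, u n ∈ U := by
  rw [Nat.frequently_atTop_iff_infinite]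
  intro hfin
  obtain ⟨_, hnU, ⟨n, rfl⟩, hn⟩ := (hu.sdiff_finite (hfin.image u)).inter_open_nonempty U hU hne
  exact hn ⟨n, hnU, rfl⟩

section Shift

variable {𝕜 E : Type*} [NormedField 𝕜] [NormedAddCommGroup E] [NormedSpace 𝕜 E]
  {p : ℝ≥0∞} [Fact (1 ≤ p)] {B : lp (fun _ : ℕ => E) p →L[𝕜] lp (fun _ : ℕ => E) p}

theorem shift_pow_apply (hB : ∀ x n, B x n = x (n + 1)) (m : ℕ) (x : lp (fun _ : ℕ => E) p)
    (n : ℕ) : (B ^ m) x n = x (n + m) := by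
  induction m generalizing x with
  | zero => rfl
  | succ m ih => rw [pow_succ, mul_apply_eq_comp, ih, hB, Nat.add_assoc]

theorem smul_shift_pow_apply_zero (hB : ∀ x n, B x n = x (n + 1)) (c : 𝕜) (m : ℕ)
    (x : lp (fun _ : ℕ => E) p) : ((c • B) ^ m) x 0 = c ^ m • x m := by
  rw [smul_pow, smul_apply, lp.coeFn_smul, Pi.smul_apply,
    shift_pow_apply hB, zero_add]

end Shift

theorem volume_setOf_exp_mul_mul_mem_Ioo_le {a b c r : ℝ} (ha : 0 < a) (hr : 0 < r) :
    volume {t : ℝ | exp (r * t) * c ∈ Ioo a b} ≤ ENNReal.ofReal ((log b - log a) / r) := by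
  rcases le_or_gt c 0 with hc | hc
  · have : {t : ℝ | exp (r * t) * c ∈ Ioo a b} = ∅ :=
      eq_empty_of_forall_notMem fun t ht =>
        (mul_nonpos_of_nonneg_of_nonpos (exp_pos _).le hc).not_gt (ha.trans ht.1)
    rw [this, measure_empty]
    exact zero_le
  have hsub : {t : ℝ | exp (r * t) * c ∈ Ioo a b} ⊆
      Ioo ((log a - log c) / r) ((log b - log c) / r) := by
    rintro t ⟨hat, htb⟩
    have hlog : log (exp (r * t) * c) = r * t + log c := by
      rw [log_mul (exp_pos _).ne' hc.ne', log_exp]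
    have h₁ := log_lt_log ha hat
    have h₂ := log_lt_log (ha.trans hat) htb
    constructor
    · rw [div_lt_iff₀ hr]; linarith
    · rw [lt_div_iff₀ hr]; linarith
  calc volume {t : ℝ | exp (r * t) * c ∈ Ioo a b}
      ≤ volume (Ioo ((log a - log c) / r) ((log b - log c) / r)) := measure_mono hsub
    _ = ENNReal.ofReal ((log b - log a) / r) := by rw [volume_Ioo]; congr 1; ring

theorem volume_setOf_frequently_exp_mul_mul_mem_Ioo {r : ℕ → ℝ} (hr : ∀ n, 0 < r n)
    (hsum : Summable fun n => 1 / r n) (c : ℕ → ℝ) {a b : ℝ} (ha : 0 < a) :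
    volume {t : ℝ | ∃ᶠ n in atTop, exp (r n * t) * c n ∈ Ioo a b} = 0 := by
  refine measure_setOfPred_frequently_eq_zero (ne_top_of_le_ne_top ?_
    (ENNReal.tsum_le_tsum fun n => volume_setOf_exp_mul_mul_mem_Ioo_le (c := c n) ha (hr n)))
  simpa only [mul_one_div] using (hsum.mul_left (log b - log a)).tsum_ofReal_ne_top

theorem not_exists_forall_denseRange_smul_shift_pow {p : ℝ≥0∞} [Fact (1 ≤ p)]
    {B : lp (fun _ : ℕ => ℂ) p →L[ℂ] lp (fun _ : ℕ => ℂ) p} (hB : ∀ x n, B x n = x (n + 1))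
    {k : ℕ → ℕ} (hkpos : ∀ n, 0 < k n) (hsum : Summable fun n => (1 : ℝ) / k n)
    {μ₀ M₀ : ℝ} (hμ₀ : 0 < μ₀) (hM₀ : μ₀ < M₀) :
    ¬ ∃ x : lp (fun _ : ℕ => ℂ) p, ∀ l ∈ Icc μ₀ M₀,
      DenseRange fun n => (((l : ℂ) • B) ^ k n) x := by
  rintro ⟨x, hx⟩
  set U : Set (lp (fun _ : ℕ => ℂ) p) := {y | ‖y 0‖ ∈ Ioo 1 2}
  have hU : IsOpen U :=
    isOpen_Ioo.preimage ((lp.evalCLM ℂ (fun _ : ℕ => ℂ) p 0).continuous.norm)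
  have hUne : U.Nonempty := ⟨lp.single p 0 (3 / 2 : ℂ), by norm_num [U]⟩
  have hsub : Icc (log μ₀) (log M₀) ⊆
      {t | ∃ᶠ n in atTop, exp (k n * t) * ‖x (k n)‖ ∈ Ioo 1 2} := by
    intro t ht
    have hl : exp t ∈ Icc μ₀ M₀ :=
      ⟨(log_le_iff_le_exp hμ₀).1 ht.1, (le_log_iff_exp_le (hμ₀.trans hM₀)).1 ht.2⟩
    refine ((hx _ hl).frequently_mem hU hUne).mono fun n hn => ?_
    simp only [U, mem_ofPred_eq] at hn
    rwa [smul_shift_pow_apply_zero hB, norm_smul, norm_pow, Complex.norm_real,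
      norm_of_nonneg (exp_pos t).le, ← exp_nat_mul] at hn
  have hnull := measure_mono_null hsub <| volume_setOf_frequently_exp_mul_mul_mem_Ioo
    (fun n => Nat.cast_pos.2 (hkpos n)) hsum _ one_pos
  rw [volume_Icc, ENNReal.ofReal_eq_zero] at hnull
  linarith [log_lt_log hμ₀ hM₀]

theorem stmt_4_general (k : ℕ → ℕ) (hkpos : ∀ n, 0 < k n)
    (hsum : Summable (fun n => (1 : ℝ) / k n))
    (B : lp (fun _ : ℕ => ℂ) 2 →L[ℂ] lp (fun _ : ℕ => ℂ) 2)
    (hB : ∀ (x : lp (fun _ : ℕ => ℂ) 2) (n : ℕ), B x n = x (n + 1))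
    (μ₀ M₀ : ℝ) (hμ₀ : 1 < μ₀) (hM₀ : μ₀ < M₀) :
    (¬ ∃ x : lp (fun _ : ℕ => ℂ) 2, ∀ l : ℝ, l ∈ Set.Icc μ₀ M₀ →
      Dense (Set.range fun n => (((l : ℂ) • B) ^ k n) x)) ∧
    (⋂ l ∈ Set.Ioi (1:ℝ),
      {x : lp (fun _ : ℕ => ℂ) 2 |
        Dense (Set.range fun n => (((l : ℂ) • B) ^ k n) x)}) = ∅ := by
  have key := not_exists_forall_denseRange_smul_shift_pow hB hkpos hsum (one_pos.trans hμ₀) hM₀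
  refine ⟨key, eq_empty_of_forall_notMem fun x hx => key ⟨x, fun l hl => ?_⟩⟩
  exact mem_iInter₂.mp hx l (hμ₀.trans_le hl.1)

theorem stmt_4 (k : ℕ → ℕ) (hk : StrictMono k) (hkpos : ∀ n, 0 < k n)
    (hsum : Summable (fun n => (1 : ℝ) / k n))
    (B : lp (fun _ : ℕ => ℂ) 2 →L[ℂ] lp (fun _ : ℕ => ℂ) 2)
    (hB : ∀ (x : lp (fun _ : ℕ => ℂ) 2) (n : ℕ), B x n = x (n + 1))
    (μ₀ M₀ : ℝ) (hμ₀ : 1 < μ₀) (hM₀ : μ₀ < M₀) :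
    (¬ ∃ x : lp (fun _ : ℕ => ℂ) 2, ∀ l : ℝ, l ∈ Set.Icc μ₀ M₀ →
      Dense (Set.range fun n => (((l : ℂ) • B) ^ k n) x)) ∧
    (⋂ l ∈ Set.Ioi (1:ℝ),
      {x : lp (fun _ : ℕ => ℂ) 2 |
        Dense (Set.range fun n => (((l : ℂ) • B) ^ k n) x)}) = ∅ :=
  stmt_4_general k hkpos hsum B hB μ₀ M₀ hμ₀ hM₀
end

section
/- Let 1 < a₀ < b₀ < ∞ and let (kₙ) be a strictly increasing sequence of positive integers with ∑ₙ 1/kₙ = +∞. Then for every ε ∈ (0,1) there exist natural numbers n₀, i₀ and positive real numbers β₁, …, β_{i₀+1} such that for every λ ∈ [a₀, b₀] there is some j ∈ {0,1,…,i₀} with |λ^{k_{n₀+j}}·β_{j+1} − 1| < ε. -/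
open Finset Filter

lemma cover_step (c : ℕ → ℝ) (hc : Monotone c) :
    ∀ n (x : ℝ), c 0 ≤ x → x ≤ c (n + 1) → ∃ j ≤ n, c j ≤ x ∧ x ≤ c (j + 1) := by
  intro n
  induction n with
  | zero => intro x h0 h1; exact ⟨0, le_refl 0, h0, h1⟩
  | succ n ih =>
    intro x h0 h1
    by_cases hx : x ≤ c (n + 1)
    · obtain ⟨j, hj, h⟩ := ih x h0 hx
      exact ⟨j, hj.trans (Nat.le_succ n), h⟩
    · exact ⟨n + 1, le_refl _, (not_le.mp hx).le, h1⟩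

theorem stmt_8 (a₀ b₀ : ℝ) (ha₀ : 1 < a₀) (hab : a₀ < b₀)
    (k : ℕ → ℕ) (hk : StrictMono k) (hkpos : ∀ n, 0 < k n)
    (hdiv : ¬ Summable (fun n => (1 : ℝ) / k n))
    (ε : ℝ) (hε : ε ∈ Set.Ioo (0:ℝ) 1) :
    ∃ (n₀ i₀ : ℕ) (β : ℕ → ℝ), (∀ j ≤ i₀, 0 < β (j + 1)) ∧
      ∀ l ∈ Set.Icc a₀ b₀, ∃ j ≤ i₀, |l ^ k (n₀ + j) * β (j + 1) - 1| < ε := by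
  obtain ⟨hε0, hε1⟩ := hε
  have ha0pos : (0:ℝ) < a₀ := lt_trans one_pos ha₀
  have hb0pos : (0:ℝ) < b₀ := lt_trans ha0pos hab
  have hem : (0:ℝ) < 1 - ε / 2 := by linarith
  have hep : (0:ℝ) < 1 + ε / 2 := by linarith
  set R : ℝ := (1 + ε / 2) / (1 - ε / 2) with hRdef
  have hR : 1 < R := (one_lt_div hem).mpr (by linarith)
  have hRpos : 0 < R := lt_trans one_pos hR
  set S : ℕ → ℝ := fun n => ∑ i ∈ Finset.range n, (1 : ℝ) / k i with hSdef
  have hterm : ∀ i, (0:ℝ) ≤ 1 / k i := fun i => by positivity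
  have hStend : Tendsto S atTop atTop :=
    (not_summable_iff_tendsto_nat_atTop_of_nonneg hterm).mp hdiv
  have hSmono : Monotone S := by
    intro m n hmn
    exact Finset.sum_le_sum_of_subset_of_nonneg (Finset.range_subset_range.mpr hmn)
      (fun i _ _ => hterm i)
  set c : ℕ → ℝ := fun j => a₀ * R ^ (S j) with hcdef
  have hcpos : ∀ j, 0 < c j := fun j => mul_pos ha0pos (Real.rpow_pos_of_pos hRpos _)
  have hcmono : Monotone c := by
    intro m n hmn
    exact mul_le_mul_of_nonneg_left
      ((Real.rpow_le_rpow_left_iff hR).mpr (hSmono hmn)) ha0pos.le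
  have hc0 : c 0 = a₀ := by
    simp [hcdef, hSdef]
  -- choose i₀
  obtain ⟨i₀, hi₀⟩ := (hStend.eventually_ge_atTop (Real.logb R (b₀ / a₀))).exists_forall_of_atTop
  have hbc : b₀ ≤ c (i₀ + 1) := by
    have h1 : Real.logb R (b₀ / a₀) ≤ S (i₀ + 1) := hi₀ (i₀ + 1) (Nat.le_succ i₀)
    have h2 : R ^ Real.logb R (b₀ / a₀) ≤ R ^ S (i₀ + 1) :=
      (Real.rpow_le_rpow_left_iff hR).mpr h1
    rw [Real.rpow_logb hRpos (ne_of_gt hR) (div_pos hb0pos ha0pos)] at h2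
    have := mul_le_mul_of_nonneg_left h2 ha0pos.le
    rwa [mul_div_cancel₀ _ (ne_of_gt ha0pos)] at this
  -- key step relation
  have hstep : ∀ j, c (j + 1) = c j * R ^ ((1:ℝ) / k j) := by
    intro j
    have hS1 : S (j + 1) = S j + 1 / k j := Finset.sum_range_succ _ j
    simp only [hcdef, hS1, Real.rpow_add hRpos]
    ring
  refine ⟨0, i₀, fun j => (1 - ε / 2) / (c (j - 1)) ^ (k (j - 1)), ?_, ?_⟩
  · intro j _
    simp only [Nat.add_sub_cancel]
    exact div_pos hem (pow_pos (hcpos j) _)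
  · intro l hl
    have hl0 : c 0 ≤ l := by rw [hc0]; exact hl.1
    have hl1 : l ≤ c (i₀ + 1) := hl.2.trans hbc
    obtain ⟨j, hj, hcj, hcj1⟩ := cover_step c hcmono i₀ l hl0 hl1
    refine ⟨j, hj, ?_⟩
    simp only [Nat.add_sub_cancel, Nat.zero_add]
    set K := k j with hKdef
    have hK : 0 < K := hkpos j
    have hKne : ((K:ℝ)) ≠ 0 := Nat.cast_ne_zero.mpr (ne_of_gt hK)
    have hkey : c (j + 1) ^ K = c j ^ K * R := by
      rw [hstep j, mul_pow, ← hKdef]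
      congr 1
      rw [← Real.rpow_natCast (R ^ ((1:ℝ)/K)) K, ← Real.rpow_mul hRpos.le,
        one_div_mul_cancel hKne, Real.rpow_one]
    have hlpos : 0 < l := lt_of_lt_of_le (hcpos j) hcj
    have hlow : c j ^ K ≤ l ^ K := pow_le_pow_left₀ (hcpos j).le hcj K
    have hhigh : l ^ K ≤ c j ^ K * R := by
      rw [← hkey]; exact pow_le_pow_left₀ hlpos.le hcj1 K
    have hcjK : (0:ℝ) < c j ^ K := pow_pos (hcpos j) K
    set x := l ^ K * ((1 - ε / 2) / c j ^ K) with hxdef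
    have hx1 : 1 - ε / 2 ≤ x := by
      rw [hxdef]
      rw [mul_div_assoc']
      rw [le_div_iff₀ hcjK]
      calc (1 - ε/2) * c j ^ K ≤ (1 - ε/2) * l ^ K :=
            mul_le_mul_of_nonneg_left hlow hem.le
        _ = l ^ K * (1 - ε/2) := by ring
    have hx2 : x ≤ 1 + ε / 2 := by
      rw [hxdef, mul_div_assoc', div_le_iff₀ hcjK]
      have : l ^ K * (1 - ε/2) ≤ c j ^ K * R * (1 - ε/2) :=
        mul_le_mul_of_nonneg_right hhigh hem.le
      calc l ^ K * (1 - ε/2) ≤ c j ^ K * R * (1 - ε/2) := this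
        _ = (1 + ε/2) * c j ^ K := by
            have hRe : R * (1 - ε/2) = 1 + ε/2 := div_mul_cancel₀ _ (ne_of_gt hem)
            rw [mul_assoc, hRe, mul_comm]
    rw [abs_lt]
    constructor <;> [linarith; linarith]
end

section
/- Let (kₙ) be a strictly increasing sequence of positive integers with ∑ₙ 1/kₙ = +∞, and let B be the backward shift on ℓ². For fixed 1 < a < b, a nonzero finitely supported vector y ∈ ℓ², and s ∈ ℕ, the set of x ∈ ℓ² such that for every λ ∈ [a,b] there exists n ∈ ℕ with ‖(λB)^{kₙ}(x) − y‖ < 1/s, is dense in ℓ². -/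
/-
Approximate `x` by a finitely supported `w`, which `(λB)^(k n)` annihilates once `k n` is large,
and add `z = ∑_{i<J} μ_i^(-K_i) S^(K_i) y`, where `S` is the forward shift, `K_i = k (n₀ + i d)` are
spaced at least `d` apart and `μ_i = a · exp (c ∑_{j<i} 1/K_j)`. Since `∑ 1/K_i` still diverges,
the grid `μ_i` eventually passes `b`. For `λ ∈ [μ_j, μ_(j+1)]` the terms `i < j` of
`(λB)^(K_j) z` vanish, the term `i = j` is `(λ/μ_j)^(K_j) y` with `(λ/μ_j)^(K_j) ∈ [1, e^c]`,
and the terms `i > j` are bounded by `a^(-(K_i - K_j)) ≤ a^(-(i-j) d)`, a geometric tail.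
-/

open Filter Topology Finset
open scoped lp ENNReal

theorem Antitone.summable_of_summable_comp_add_mul {f : ℕ → ℝ} (hf : Antitone f)
    (hf0 : ∀ n, 0 ≤ f n) {n₀ d : ℕ} (hd : 0 < d)
    (h : Summable fun j => f (n₀ + j * d)) : Summable f := by
  have : NeZero d := ⟨hd.ne'⟩
  have hblocks : Summable fun n => f (n₀ + n / d * d) := by
    have hprod := h.mul_of_nonneg (.of_finite (f := fun _ : Fin d => (1 : ℝ)))
      (fun j => hf0 _) (fun _ => zero_le_one)
    simpa [Function.comp_def] using (Nat.divModEquiv d).summable_iff.mpr hprod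
  refine (summable_nat_add_iff n₀).mp (hblocks.of_nonneg_of_le (fun n => hf0 _) fun n => hf ?_)
  have := Nat.div_mul_le_self n d
  omega

theorem exists_apply_le_lt_apply_succ {α : Type*} [LinearOrder α] (t : ℕ → α) {u : α}
    (h0 : t 0 ≤ u) {J : ℕ} (hJ : u < t J) : ∃ j < J, t j ≤ u ∧ u < t (j + 1) := by
  induction J with
  | zero => exact absurd hJ (not_lt.mpr h0)
  | succ J ih =>
    by_cases h : t J ≤ u
    · exact ⟨J, J.lt_succ_self, h, hJ⟩
    · obtain ⟨j, hj, hj'⟩ := ih (not_le.mp h)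
      exact ⟨j, hj.trans J.lt_succ_self, hj'⟩

theorem add_mul_le_of_add_le_succ {K : ℕ → ℕ} {d : ℕ} (hK : ∀ i, K i + d ≤ K (i + 1))
    (i n : ℕ) : K i + n * d ≤ K (i + n) := by
  induction n with
  | zero => simp
  | succ n ih =>
    rw [Nat.succ_mul, ← add_assoc, ← add_assoc]
    exact (Nat.add_le_add_right ih d).trans (hK (i + n))

theorem add_sub_mul_le_of_add_le_succ {K : ℕ → ℕ} {d : ℕ} (hK : ∀ i, K i + d ≤ K (i + 1))
    {i j : ℕ} (hij : i ≤ j) : K i + (j - i) * d ≤ K j := by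
  simpa [Nat.add_sub_cancel' hij] using add_mul_le_of_add_le_succ hK i (j - i)

theorem pow_div_pow_le_inv_pow {a l μ : ℝ} (ha : 0 < a) (haμ : a ≤ μ) (hl : 0 ≤ l) (hlμ : l ≤ μ)
    {m n : ℕ} (hmn : m ≤ n) : l ^ m / μ ^ n ≤ a⁻¹ ^ (n - m) := by
  have hμ : 0 < μ := ha.trans_le haμ
  calc l ^ m / μ ^ n ≤ μ ^ m / μ ^ n := by gcongr
    _ = (μ ^ (n - m))⁻¹ := by rw [pow_sub₀ _ hμ.ne' hmn, mul_inv, inv_inv, div_eq_mul_inv, mul_comm]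
    _ ≤ (a ^ (n - m))⁻¹ := by gcongr
    _ = a⁻¹ ^ (n - m) := (inv_pow _ _).symm

section GeometricGaps

variable {q : ℝ} {K : ℕ → ℕ} {d : ℕ}

theorem sum_range_pow_le_of_add_le_succ (hq0 : 0 ≤ q) (hq1 : q < 1) (hd : 0 < d)
    (hK : ∀ i, K i + d ≤ K (i + 1)) (N : ℕ) :
    ∑ i ∈ range N, q ^ K i ≤ q ^ K 0 / (1 - q ^ d) := by
  have hqd : q ^ d < 1 := pow_lt_one₀ hq0 hq1 hd.ne'
  calc ∑ i ∈ range N, q ^ K i ≤ ∑ i ∈ range N, q ^ K 0 * (q ^ d) ^ i := by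
        refine sum_le_sum fun i _ => ?_
        rw [← pow_mul, ← pow_add, mul_comm]
        exact pow_le_pow_of_le_one hq0 hq1.le (by simpa using add_mul_le_of_add_le_succ hK 0 i)
    _ = q ^ K 0 * ∑ i ∈ Ico 0 N, (q ^ d) ^ i := by rw [mul_sum, range_eq_Ico]
    _ ≤ q ^ K 0 * ((q ^ d) ^ 0 / (1 - q ^ d)) := by
        gcongr
        exact geom_sum_Ico_le_of_lt_one (by positivity) hqd
    _ = q ^ K 0 / (1 - q ^ d) := by rw [pow_zero, mul_one_div]

theorem sum_Ico_pow_sub_le_of_add_le_succ (hq0 : 0 ≤ q) (hq1 : q < 1) (hd : 0 < d)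
    (hK : ∀ i, K i + d ≤ K (i + 1)) (j J : ℕ) :
    ∑ i ∈ Ico (j + 1) J, q ^ (K i - K j) ≤ q ^ d / (1 - q ^ d) := by
  have hmono (m : ℕ) : K j ≤ K (j + 1 + m) := by
    have := add_mul_le_of_add_le_succ hK j (1 + m); rw [← add_assoc] at this; omega
  have hK' : ∀ m, K (j + 1 + m) - K j + d ≤ K (j + 1 + (m + 1)) - K j := fun m => by
    have := hK (j + 1 + m); have := hmono m; rw [← add_assoc]; omega
  rw [sum_Ico_eq_sum_range]
  refine (sum_range_pow_le_of_add_le_succ hq0 hq1 hd hK' _).trans ?_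
  have hqd : q ^ d < 1 := pow_lt_one₀ hq0 hq1 hd.ne'
  refine div_le_div_of_nonneg_right (pow_le_pow_of_le_one hq0 hq1.le ?_) (by linarith)
  simpa using Nat.le_sub_of_add_le' (hK j)

end GeometricGaps

noncomputable def expGrid (a c : ℝ) (K : ℕ → ℕ) (j : ℕ) : ℝ :=
  a * Real.exp (c * ∑ i ∈ range j, (K i : ℝ)⁻¹)

section ExpGrid

variable {a c : ℝ} {K : ℕ → ℕ}

@[simp] theorem expGrid_zero : expGrid a c K 0 = a := by simp [expGrid]

theorem monotone_expGrid (ha : 0 ≤ a) (hc : 0 ≤ c) : Monotone (expGrid a c K) := by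
  refine monotone_nat_of_le_succ fun j => ?_
  unfold expGrid
  gcongr
  exact j.le_succ

theorem expGrid_succ_div_pow (ha : a ≠ 0) {j : ℕ} (hK : K j ≠ 0) :
    (expGrid a c K (j + 1) / expGrid a c K j) ^ K j = Real.exp c := by
  rw [expGrid, expGrid, sum_range_succ, mul_div_mul_left _ _ ha, ← Real.exp_sub, mul_add,
    add_sub_cancel_left, ← Real.exp_nat_mul, mul_left_comm, mul_inv_cancel₀ (by exact_mod_cast hK),
    mul_one]

theorem exists_lt_expGrid (ha : 0 < a) (hc : 0 < c) (hK : ¬Summable fun i => (K i : ℝ)⁻¹)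
    (b : ℝ) : ∃ J, b < expGrid a c K J := by
  have hsum := (not_summable_iff_tendsto_nat_atTop_of_nonneg (fun i => by positivity)).mp hK
  exact ((Real.tendsto_exp_atTop.comp (hsum.const_mul_atTop hc)).const_mul_atTop ha
    |>.eventually_gt_atTop b).exists

end ExpGrid

def IsBackwardShift (B : ℓ²(ℕ, ℂ) →L[ℂ] ℓ²(ℕ, ℂ)) : Prop := ∀ x n, B x n = x (n + 1)

-- `S^N (𝟙_F v)` for the forward shift `S`
noncomputable def truncShift (F : Finset ℕ) (v : ℕ → ℂ) (N : ℕ) : ℓ²(ℕ, ℂ) :=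
  ∑ t ∈ F, lp.single 2 (t + N) (v t)

variable {B : ℓ²(ℕ, ℂ) →L[ℂ] ℓ²(ℕ, ℂ)}

theorem IsBackwardShift.smul_pow_apply (hB : IsBackwardShift B) (c : ℂ) (K : ℕ)
    (x : ℓ²(ℕ, ℂ)) (n : ℕ) : ((c • B) ^ K) x n = c ^ K * x (n + K) := by
  induction K generalizing x with
  | zero => simp
  | succ K ih =>
    rw [pow_succ, mul_apply_eq_comp, ih, smul_apply,
      lp.coeFn_smul, Pi.smul_apply, hB, smul_eq_mul, pow_succ, ← add_assoc]
    ring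

theorem IsBackwardShift.smul_pow_single (hB : IsBackwardShift B) (c : ℂ) (K m : ℕ) (v : ℂ) :
    ((c • B) ^ K) (lp.single 2 m v) = if K ≤ m then c ^ K • lp.single 2 (m - K) v else 0 := by
  ext n
  rw [hB.smul_pow_apply]
  split_ifs with h
  · by_cases hn : n = m - K
    · subst hn; simp [Nat.sub_add_cancel h]
    · simp [hn, show n + K ≠ m by omega]
  · simp [show n + K ≠ m by omega]

theorem IsBackwardShift.smul_pow_truncShift_of_le (hB : IsBackwardShift B) (c : ℂ)
    (F : Finset ℕ) (v : ℕ → ℂ) {K N : ℕ} (h : K ≤ N) :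
    ((c • B) ^ K) (truncShift F v N) = c ^ K • truncShift F v (N - K) := by
  simp only [truncShift, map_sum, smul_sum, hB.smul_pow_single,
    if_pos (h.trans (Nat.le_add_left N _))]
  congr! 3; omega

theorem IsBackwardShift.smul_pow_truncShift_eq_zero (hB : IsBackwardShift B) (c : ℂ)
    {F : Finset ℕ} (v : ℕ → ℂ) {K N : ℕ} (h : ∀ t ∈ F, t + N < K) :
    ((c • B) ^ K) (truncShift F v N) = 0 := by
  simp only [truncShift, map_sum]
  exact sum_eq_zero fun t ht => by rw [hB.smul_pow_single, if_neg (not_le.mpr (h t ht))]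

theorem norm_truncShift_le (F : Finset ℕ) (v : ℕ → ℂ) (N : ℕ) :
    ‖truncShift F v N‖ ≤ ∑ t ∈ F, ‖v t‖ :=
  (norm_sum_le _ _).trans <| sum_le_sum fun t _ => (lp.norm_single (by norm_num) _ _).le

theorem truncShift_zero {F : Finset ℕ} {y : ℓ²(ℕ, ℂ)} (hy : ∀ n ∉ F, y n = 0) :
    truncShift F y 0 = y := by
  ext n
  simp only [truncShift, add_zero, lp.coeFn_sum, Finset.sum_apply, lp.single_apply, Pi.single_apply]
  by_cases hn : n ∈ F <;> simp [hn, hy]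

theorem tendsto_truncShift_range (x : ℓ²(ℕ, ℂ)) :
    Tendsto (fun m => truncShift (range m) x 0) atTop (𝓝 x) := by
  simpa [truncShift] using (lp.hasSum_single (by norm_num : (2 : ℝ≥0∞) ≠ ⊤) x).tendsto_sum_nat

theorem IsBackwardShift.smul_pow_sum_truncShift (hB : IsBackwardShift B) (c : ℂ) (w : ℕ → ℂ)
    {F : Finset ℕ} {d : ℕ} (hF : ∀ t ∈ F, t < d) {y : ℓ²(ℕ, ℂ)} (hy : ∀ n ∉ F, y n = 0)
    {K : ℕ → ℕ} (hK : ∀ i, K i + d ≤ K (i + 1)) {j J : ℕ} (hj : j < J) :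
    ((c • B) ^ K j) (∑ i ∈ range J, w i • truncShift F y (K i)) =
      (c ^ K j * w j) • y + ∑ i ∈ Ico (j + 1) J, (c ^ K j * w i) • truncShift F y (K i - K j) := by
  have hlow : ∑ i ∈ range j, ((c • B) ^ K j) (w i • truncShift F y (K i)) = 0 := by
    refine sum_eq_zero fun i hi => ?_
    have hij := mem_range.mp hi
    have hgap := add_sub_mul_le_of_add_le_succ hK hij.le
    have : d ≤ (j - i) * d := Nat.le_mul_of_pos_left d (by omega)
    rw [map_smul, hB.smul_pow_truncShift_eq_zero _ _ fun t ht => by linarith [hF t ht], smul_zero]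
  have hhigh : ∀ i ∈ Ico (j + 1) J, ((c • B) ^ K j) (w i • truncShift F y (K i)) =
      (c ^ K j * w i) • truncShift F y (K i - K j) := by
    intro i hi
    have := add_sub_mul_le_of_add_le_succ hK (Nat.le_of_succ_le (mem_Ico.mp hi).1)
    rw [map_smul, hB.smul_pow_truncShift_of_le _ _ _ (by omega), smul_smul, mul_comm]
  rw [map_sum, ← sum_range_add_sum_Ico _ hj.le, sum_eq_sum_Ico_succ_bot hj, hlow, zero_add,
    sum_congr rfl hhigh, map_smul, hB.smul_pow_truncShift_of_le _ _ _ le_rfl, Nat.sub_self,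
    truncShift_zero hy, smul_smul, mul_comm]

theorem norm_sum_smul_truncShift_le (s : Finset ℕ) (w : ℕ → ℂ) (F : Finset ℕ) (v : ℕ → ℂ)
    (N : ℕ → ℕ) : ‖∑ i ∈ s, w i • truncShift F v (N i)‖ ≤ (∑ i ∈ s, ‖w i‖) * ∑ t ∈ F, ‖v t‖ := by
  rw [sum_mul]
  refine (norm_sum_le _ _).trans (sum_le_sum fun i _ => ?_)
  rw [norm_smul]
  exact mul_le_mul_of_nonneg_left (norm_truncShift_le F v (N i)) (norm_nonneg _)

theorem norm_sum_inv_pow_smul_truncShift_le {a : ℝ} (ha : 1 < a) {μ : ℕ → ℝ}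
    (haμ : ∀ i, a ≤ μ i) {K : ℕ → ℕ} {d : ℕ} (hd : 0 < d) (hK : ∀ i, K i + d ≤ K (i + 1))
    (F : Finset ℕ) (v : ℕ → ℂ) (J : ℕ) :
    ‖∑ i ∈ range J, ((μ i : ℂ) ^ K i)⁻¹ • truncShift F v (K i)‖ ≤
      a⁻¹ ^ K 0 / (1 - a⁻¹ ^ d) * ∑ t ∈ F, ‖v t‖ := by
  have ha0 : 0 < a := one_pos.trans ha
  refine (norm_sum_smul_truncShift_le _ _ _ _ _).trans
    (mul_le_mul_of_nonneg_right ?_ (sum_nonneg fun _ _ => norm_nonneg _))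
  refine (sum_le_sum fun i _ => ?_).trans
    (sum_range_pow_le_of_add_le_succ (by positivity) (inv_lt_one_of_one_lt₀ ha) hd hK J)
  rw [norm_inv, norm_pow, Complex.norm_real, Real.norm_of_nonneg (ha0.trans_le (haμ i)).le, inv_pow]
  exact inv_anti₀ (by positivity) (pow_le_pow_left₀ ha0.le (haμ i) _)

theorem IsBackwardShift.norm_smul_pow_sum_sub_le (hB : IsBackwardShift B) {F : Finset ℕ}
    {d : ℕ} (hF : ∀ t ∈ F, t < d) (hd : 0 < d) {y : ℓ²(ℕ, ℂ)} (hy : ∀ n ∉ F, y n = 0)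
    {K : ℕ → ℕ} (hK : ∀ i, K i + d ≤ K (i + 1)) {a : ℝ} (ha : 1 < a) {μ : ℕ → ℝ}
    (hμ : Monotone μ) (haμ : a ≤ μ 0) {j J : ℕ} (hj : j < J) {l : ℝ} (hjl : μ j ≤ l)
    (hlj : l ≤ μ (j + 1)) :
    ‖(((l : ℂ) • B) ^ K j) (∑ i ∈ range J, ((μ i : ℂ) ^ K i)⁻¹ • truncShift F y (K i)) - y‖ ≤
      ((μ (j + 1) / μ j) ^ K j - 1) * ‖y‖ + a⁻¹ ^ d / (1 - a⁻¹ ^ d) * ∑ t ∈ F, ‖y t‖ := by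
  have ha0 : 0 < a := one_pos.trans ha
  have haμ' (i : ℕ) : a ≤ μ i := haμ.trans (hμ i.zero_le)
  have hl0 : 0 ≤ l := ha0.le.trans ((haμ' j).trans hjl)
  have hcoef (i : ℕ) : ‖(l : ℂ) ^ K j * ((μ i : ℂ) ^ K i)⁻¹‖ = l ^ K j / μ i ^ K i := by
    rw [norm_mul, norm_inv, norm_pow, norm_pow, Complex.norm_real, Complex.norm_real,
      Real.norm_of_nonneg hl0, Real.norm_of_nonneg (ha0.trans_le (haμ' i)).le, div_eq_mul_inv]
  set ρ := (l / μ j) ^ K j with hρ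
  have hρ1 : 1 ≤ ρ := one_le_pow₀ ((one_le_div (ha0.trans_le (haμ' j))).mpr hjl)
  have hρle : ρ ≤ (μ (j + 1) / μ j) ^ K j :=
    pow_le_pow_left₀ (div_nonneg hl0 (ha0.trans_le (haμ' j)).le)
      (div_le_div_of_nonneg_right hlj (ha0.trans_le (haμ' j)).le) _
  have hmain : ‖(ρ : ℂ) • y - y‖ ≤ ((μ (j + 1) / μ j) ^ K j - 1) * ‖y‖ := by
    have : (ρ : ℂ) • y - y = ((ρ - 1 : ℝ) : ℂ) • y := by
      rw [Complex.ofReal_sub, Complex.ofReal_one, sub_smul, one_smul]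
    rw [this, norm_smul, Complex.norm_real, Real.norm_of_nonneg (by linarith)]
    gcongr
  have hcross : ‖∑ i ∈ Ico (j + 1) J,
      ((l : ℂ) ^ K j * ((μ i : ℂ) ^ K i)⁻¹) • truncShift F y (K i - K j)‖ ≤
      a⁻¹ ^ d / (1 - a⁻¹ ^ d) * ∑ t ∈ F, ‖y t‖ := by
    refine (norm_sum_smul_truncShift_le _ _ _ _ _).trans
      (mul_le_mul_of_nonneg_right ?_ (sum_nonneg fun _ _ => norm_nonneg _))
    refine (sum_le_sum fun i hi => ?_).trans (sum_Ico_pow_sub_le_of_add_le_succ (by positivity)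
      (inv_lt_one_of_one_lt₀ ha) hd hK j J)
    have hji : j + 1 ≤ i := (mem_Ico.mp hi).1
    rw [hcoef]
    exact pow_div_pow_le_inv_pow ha0 (haμ' i) hl0 (hlj.trans (hμ hji))
      ((Nat.le_add_right _ _).trans (add_sub_mul_le_of_add_le_succ hK (Nat.le_of_succ_le hji)))
  have hρc : (l : ℂ) ^ K j * ((μ j : ℂ) ^ K j)⁻¹ = (ρ : ℂ) := by
    rw [hρ, Complex.ofReal_pow, Complex.ofReal_div, div_pow, div_eq_mul_inv]
  rw [hB.smul_pow_sum_truncShift _ _ hF hy hK hj, hρc, add_sub_right_comm]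
  exact (norm_add_le _ _).trans (add_le_add hmain hcross)

theorem StrictMono.apply_add_mul_add_le {k : ℕ → ℕ} (hk : StrictMono k) (n₀ d i : ℕ) :
    k (n₀ + i * d) + d ≤ k (n₀ + (i + 1) * d) := by
  have := hk.add_le_nat d (n₀ + i * d)
  rwa [add_comm, show d + (n₀ + i * d) = n₀ + (i + 1) * d by ring] at this

theorem not_summable_inv_apply_add_mul {k : ℕ → ℕ} (hk : Monotone k) (hkpos : ∀ n, 0 < k n)
    (hdiv : ¬Summable fun n => (1 : ℝ) / k n) (n₀ : ℕ) {d : ℕ} (hd : 0 < d) :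
    ¬Summable fun i => (k (n₀ + i * d) : ℝ)⁻¹ := fun h => hdiv <|
  Antitone.summable_of_summable_comp_add_mul
    (fun i j hij => one_div_le_one_div_of_le (by exact_mod_cast hkpos i) (by exact_mod_cast hk hij))
    (fun n => by positivity) hd (by simpa only [one_div] using h)

theorem IsBackwardShift.exists_small_perturbation_of_spacing (hB : IsBackwardShift B)
    {k : ℕ → ℕ} (hk : StrictMono k) (hkpos : ∀ n, 0 < k n)
    (hdiv : ¬Summable fun n => (1 : ℝ) / k n) {a : ℝ} (ha : 1 < a) (b : ℝ) {F : Finset ℕ}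
    {d : ℕ} (hF : ∀ t ∈ F, t < d) (hd : 0 < d) {y : ℓ²(ℕ, ℂ)} (hy : ∀ n ∉ F, y n = 0) {δ : ℝ}
    (hδ : 0 < δ) (hdδ : a⁻¹ ^ d / (1 - a⁻¹ ^ d) * ∑ t ∈ F, ‖y t‖ < δ / 2) {n₀ : ℕ} {η : ℝ}
    (hn₀η : a⁻¹ ^ n₀ / (1 - a⁻¹ ^ d) * ∑ t ∈ F, ‖y t‖ < η) :
    ∃ z : ℓ²(ℕ, ℂ), ‖z‖ < η ∧
      ∀ l ∈ Set.Icc a b, ∃ n, n₀ ≤ k n ∧ ‖(((l : ℂ) • B) ^ k n) z - y‖ < δ := by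
  have ha0 : 0 < a := one_pos.trans ha
  set K := fun i => k (n₀ + i * d)
  set θ := 1 + δ / (2 * (‖y‖ + 1))
  have hc : 0 < Real.log θ := Real.log_pos (by simp only [θ]; linarith [(by positivity :
    0 < δ / (2 * (‖y‖ + 1)))])
  set μ := expGrid a (Real.log θ) K
  have hμa (i : ℕ) : a ≤ μ i := by simpa [μ] using monotone_expGrid ha0.le hc.le i.zero_le
  obtain ⟨J, hJ⟩ :=
    exists_lt_expGrid ha0 hc (not_summable_inv_apply_add_mul hk.monotone hkpos hdiv n₀ hd) b
  refine ⟨∑ i ∈ range J, ((μ i : ℂ) ^ K i)⁻¹ • truncShift F y (K i), ?_, ?_⟩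
  · refine (norm_sum_inv_pow_smul_truncShift_le ha hμa hd (hk.apply_add_mul_add_le n₀ d) F y J
      |>.trans_lt (hn₀η.trans_le' ?_))
    have hq1 : a⁻¹ ^ d < 1 := pow_lt_one₀ (by positivity) (inv_lt_one_of_one_lt₀ ha) hd.ne'
    exact mul_le_mul_of_nonneg_right (div_le_div_of_nonneg_right (pow_le_pow_of_le_one
      (by positivity) (inv_lt_one_of_one_lt₀ ha).le (by simpa [K] using hk.le_apply))
      (by linarith)) (sum_nonneg fun _ _ => norm_nonneg _)
  · rintro l ⟨hal, hlb⟩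
    obtain ⟨j, hj, hjl, hlj⟩ :=
      exists_apply_le_lt_apply_succ μ (by simpa [μ] using hal) (hlb.trans_lt hJ)
    have hratio : (μ (j + 1) / μ j) ^ K j = θ :=
      (expGrid_succ_div_pow (K := K) ha0.ne' (hkpos (n₀ + j * d)).ne').trans
        (Real.exp_log (by positivity))
    refine ⟨n₀ + j * d, (Nat.le_add_right _ _).trans hk.le_apply, ?_⟩
    calc ‖(((l : ℂ) • B) ^ K j) (∑ i ∈ range J, ((μ i : ℂ) ^ K i)⁻¹ • truncShift F y (K i)) - y‖
        ≤ (θ - 1) * ‖y‖ + a⁻¹ ^ d / (1 - a⁻¹ ^ d) * ∑ t ∈ F, ‖y t‖ := hratio ▸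
          hB.norm_smul_pow_sum_sub_le hF hd hy (hk.apply_add_mul_add_le n₀ d) ha
            (monotone_expGrid ha0.le hc.le) (by simp) hj hjl hlj.le
      _ < δ / 2 + δ / 2 := by
          gcongr
          calc (θ - 1) * ‖y‖ = δ / (2 * (‖y‖ + 1)) * ‖y‖ := by simp only [θ]; ring
            _ < δ / (2 * (‖y‖ + 1)) * (‖y‖ + 1) := by gcongr; exact lt_add_one _
            _ = δ / 2 := by field_simp
      _ = δ := add_halves δ

theorem IsBackwardShift.exists_small_perturbation (hB : IsBackwardShift B) {k : ℕ → ℕ}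
    (hk : StrictMono k) (hkpos : ∀ n, 0 < k n) (hdiv : ¬Summable fun n => (1 : ℝ) / k n)
    {a : ℝ} (ha : 1 < a) (b : ℝ) {y : ℓ²(ℕ, ℂ)} (hyfin : {n | y n ≠ 0}.Finite) {δ : ℝ}
    (hδ : 0 < δ) (m : ℕ) {η : ℝ} (hη : 0 < η) :
    ∃ z : ℓ²(ℕ, ℂ), ‖z‖ < η ∧
      ∀ l ∈ Set.Icc a b, ∃ n, m ≤ k n ∧ ‖(((l : ℂ) • B) ^ k n) z - y‖ < δ := by
  obtain ⟨d₀, hd₀⟩ := hyfin.toFinset.exists_nat_subset_range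
  set Y := ∑ t ∈ hyfin.toFinset, ‖y t‖
  have hq0 : 0 ≤ a⁻¹ := by positivity
  have hpow := tendsto_pow_atTop_nhds_zero_of_lt_one hq0 (inv_lt_one_of_one_lt₀ ha)
  have hgeom : Tendsto (fun d : ℕ => a⁻¹ ^ d / (1 - a⁻¹ ^ d) * Y) atTop (𝓝 0) := by
    simpa using (hpow.div (tendsto_const_nhds.sub hpow) (by simp)).mul_const Y
  obtain ⟨d, hdd₀, hd, hdδ⟩ := ((eventually_ge_atTop d₀).and ((eventually_gt_atTop 0).and
    (hgeom.eventually (gt_mem_nhds (half_pos hδ))))).exists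
  have htail : Tendsto (fun n : ℕ => a⁻¹ ^ n / (1 - a⁻¹ ^ d) * Y) atTop (𝓝 0) := by
    simpa using (hpow.div_const (1 - a⁻¹ ^ d)).mul_const Y
  obtain ⟨n₀, hmn₀, hn₀η⟩ :=
    ((eventually_ge_atTop m).and (htail.eventually (gt_mem_nhds hη))).exists
  obtain ⟨z, hz, hzy⟩ := hB.exists_small_perturbation_of_spacing hk hkpos hdiv ha b
    (fun t ht => (mem_range.mp (hd₀ ht)).trans_le hdd₀) hd (by simp) hδ hdδ hn₀η
  exact ⟨z, hz, fun l hl => (hzy l hl).imp fun n hn => ⟨hmn₀.trans hn.1, hn.2⟩⟩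

theorem stmt_10_general (k : ℕ → ℕ) (hk : StrictMono k) (hkpos : ∀ n, 0 < k n)
    (hdiv : ¬ Summable (fun n => (1 : ℝ) / k n))
    (B : lp (fun _ : ℕ => ℂ) 2 →L[ℂ] lp (fun _ : ℕ => ℂ) 2)
    (hB : ∀ (x : lp (fun _ : ℕ => ℂ) 2) (n : ℕ), B x n = x (n + 1))
    (a b : ℝ) (ha : 1 < a)
    (y : lp (fun _ : ℕ => ℂ) 2) (hyfin : {n : ℕ | y n ≠ 0}.Finite)
    (s : ℕ) (hs : 0 < s) :
    Dense {x : lp (fun _ : ℕ => ℂ) 2 | ∀ l ∈ Set.Icc a b,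
      ∃ n, ‖(((l : ℂ) • B) ^ k n) x - y‖ < 1 / s} := by
  have hB : IsBackwardShift B := hB
  refine Metric.dense_iff.mpr fun x ε hε => ?_
  obtain ⟨m, hm⟩ :=
    ((tendsto_truncShift_range x).eventually (Metric.ball_mem_nhds x (half_pos hε))).exists
  obtain ⟨z, hz, hzy⟩ := hB.exists_small_perturbation hk hkpos hdiv ha b hyfin
    (by positivity : (0 : ℝ) < 1 / s) m (half_pos hε)
  refine ⟨truncShift (range m) x 0 + z, ?_, fun l hl => ?_⟩
  · rw [dist_eq_norm] at hm
    rw [Metric.mem_ball, dist_eq_norm]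
    calc ‖truncShift (range m) x 0 + z - x‖ ≤ ‖truncShift (range m) x 0 - x‖ + ‖z‖ := by
          rw [add_sub_right_comm]; exact norm_add_le _ _
      _ < ε / 2 + ε / 2 := add_lt_add hm hz
      _ = ε := add_halves ε
  · obtain ⟨n, hmn, hn⟩ := hzy l hl
    refine ⟨n, ?_⟩
    rwa [map_add, hB.smul_pow_truncShift_eq_zero _ _ fun t ht => by simp at ht; omega, zero_add]

theorem stmt_10 (k : ℕ → ℕ) (hk : StrictMono k) (hkpos : ∀ n, 0 < k n)
    (hdiv : ¬ Summable (fun n => (1 : ℝ) / k n))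
    (B : lp (fun _ : ℕ => ℂ) 2 →L[ℂ] lp (fun _ : ℕ => ℂ) 2)
    (hB : ∀ (x : lp (fun _ : ℕ => ℂ) 2) (n : ℕ), B x n = x (n + 1))
    (a b : ℝ) (ha : 1 < a) (hab : a < b)
    (y : lp (fun _ : ℕ => ℂ) 2) (hy : y ≠ 0) (hyfin : {n : ℕ | y n ≠ 0}.Finite)
    (s : ℕ) (hs : 0 < s) :
    Dense {x : lp (fun _ : ℕ => ℂ) 2 | ∀ l ∈ Set.Icc a b,
      ∃ n, ‖(((l : ℂ) • B) ^ k n) x - y‖ < 1 / s} :=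
  stmt_10_general k hk hkpos hdiv B hB a b ha y hyfin s hs
end

section
/- Let (kₙ) be a strictly increasing sequence of positive integers with ∑ₙ 1/kₙ = +∞ and let B be the backward shift on ℓ². Then the set ⋂_{λ ∈ (1,∞)} HC({(λB)^{kₙ}}) is residual in ℓ²; in particular it is nonempty. -/
/-!
The backward shift `B` has the forward shift `S` as a contractive right inverse, and the vectors
killed by some power of `B` are dense. Fix such `u` and `v`, an interval `[a, b]` with `1 < a`,
and exponents `m j = k (n₀ + L j)` along a sparse progression, so that `∑ 1 / m j = ∞` still.
With `Λ j = a * exp (η ∑_{i<j} 1 / m i)` put `x = v + ∑_{j<q} Λ j ^ (-m j) • S ^ m j u`.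
Then `Λ` climbs from `a` past `b`, and for `l ∈ [Λ j, Λ (j + 1)]` the operator `(l B) ^ m j`
kills `v` and the earlier summands, returns the `j`-th one as `u` times a factor in
`[1, exp η]`, and leaves a geometrically small tail; meanwhile `x` is close to `v`.
So for compact `I ⊆ (1, ∞)` and open `U`, the vectors `x` such that every `l ∈ I` sends some
`(l B) ^ k n x` into `U` form a dense open set, and Baire's theorem over a countable base and
countably many compact intervals exhausting `(1, ∞)` gives the residual set.
-/

open Filter Topology Function Finset Real TopologicalSpace
open scoped lp ENNReal

theorem exists_lt_le_lt_succ {α : Type*} [LinearOrder α] {f : ℕ → α} {x : α} (h0 : f 0 ≤ x)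
    {q : ℕ} (hq : x < f q) : ∃ j < q, f j ≤ x ∧ x < f (j + 1) := by
  induction q with
  | zero => exact absurd hq (not_lt.2 h0)
  | succ q ih =>
    by_cases h : x < f q
    · obtain ⟨j, hj, hx⟩ := ih h
      exact ⟨j, by omega, hx⟩
    · exact ⟨q, by omega, not_lt.1 h, hq⟩

theorem abs_pow_mul_inv_pow_sub_one_le {Λ l η : ℝ} {K : ℕ} (hK : K ≠ 0) (hΛ : 0 < Λ)
    (hΛl : Λ ≤ l) (hl : l ≤ Λ * exp (η / K)) : |l ^ K * (Λ ^ K)⁻¹ - 1| ≤ exp η - 1 := by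
  have h1 : 1 ≤ l / Λ := (one_le_div hΛ).2 hΛl
  have h2 : l / Λ ≤ exp (η / K) := (div_le_iff₀' hΛ).2 hl
  rw [← div_eq_mul_inv, ← div_pow, abs_of_nonneg (sub_nonneg.2 (one_le_pow₀ h1))]
  have : (l / Λ) ^ K ≤ exp η := by
    calc (l / Λ) ^ K ≤ exp (η / K) ^ K := by gcongr
      _ = exp η := by rw [← exp_nat_mul, mul_div_cancel₀ _ (Nat.cast_ne_zero.2 hK)]
  linarith

theorem pow_mul_inv_pow_le {a Λ l : ℝ} {K m : ℕ} (ha : 0 < a) (haΛ : a ≤ Λ) (hl0 : 0 ≤ l)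
    (hlΛ : l ≤ Λ) (hKm : K ≤ m) : l ^ K * (Λ ^ m)⁻¹ ≤ a⁻¹ ^ (m - K) := by
  have hΛ : 0 < Λ := ha.trans_le haΛ
  obtain ⟨d, rfl⟩ := Nat.exists_eq_add_of_le hKm
  calc l ^ K * (Λ ^ (K + d))⁻¹ = (l / Λ) ^ K * Λ⁻¹ ^ d := by
        rw [pow_add, mul_inv, div_pow, inv_pow, div_eq_mul_inv]; ring
    _ ≤ 1 * a⁻¹ ^ d := by
        gcongr
        · exact pow_le_one₀ (by positivity) ((div_le_one hΛ).2 hlΛ)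
    _ = a⁻¹ ^ (K + d - K) := by rw [one_mul, Nat.add_sub_cancel_left]

theorem Antitone.summable_comp_mul_iff {f : ℕ → ℝ} (hf : Antitone f) {L : ℕ} (hL : 0 < L) :
    (Summable fun j => f (L * j)) ↔ Summable f := by
  have : NeZero L := NeZero.of_pos hL
  have h := summable_indicator_mod_iff_summable L 0 f
  rw [Nat.cast_zero, summable_indicator_mod_iff hf] at h
  simpa only [add_zero] using h.symm

theorem exists_lt_sum_one_div_comp_add_mul {k : ℕ → ℕ} (hk : StrictMono k)
    (hdiv : ¬ Summable fun n => (1 : ℝ) / k n) {n₀ L : ℕ} (hn₀ : 0 < n₀) (hL : 0 < L) (C : ℝ) :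
    ∃ q, C < ∑ j ∈ range q, (1 : ℝ) / k (n₀ + L * j) := by
  have hanti : Antitone fun n => (1 : ℝ) / k (n₀ + n) := fun i j h =>
    one_div_le_one_div_of_le
      (Nat.cast_pos.2 (hn₀.trans_le ((Nat.le_add_right _ _).trans hk.le_apply)))
      (by exact_mod_cast hk.monotone (by omega))
  have hnot : ¬ Summable fun j => (1 : ℝ) / k (n₀ + L * j) := by
    rw [hanti.summable_comp_mul_iff hL]
    rw [← summable_nat_add_iff n₀] at hdiv
    simpa only [add_comm] using hdiv
  exact ((not_summable_iff_tendsto_nat_atTop_of_nonneg fun j => by positivity).1 hnot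
    |>.eventually_gt_atTop C).exists

section Operators

variable {𝕜 X : Type*} [RCLike 𝕜] [NormedAddCommGroup X] [NormedSpace 𝕜 X]
  {T : X →L[𝕜] X} {S : X → X}

theorem pow_apply_eq_zero_of_le {N K : ℕ} {u : X} (hu : (T ^ N) u = 0) (h : N ≤ K) :
    (T ^ K) u = 0 := by
  rw [← Nat.sub_add_cancel h, pow_add, mul_apply_eq_comp, hu, map_zero]

theorem pow_apply_iterate_of_le (hTS : LeftInverse T S) {K m : ℕ} (h : K ≤ m) (y : X) :
    (T ^ K) (S^[m] y) = S^[m - K] y := by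
  obtain ⟨d, rfl⟩ := Nat.exists_eq_add_of_le h
  rw [Nat.add_sub_cancel_left, iterate_add_apply, FunLike.coe_pow_eq_iterate]
  exact hTS.iterate K _

theorem pow_apply_iterate_eq_zero (hTS : LeftInverse T S) {N K m : ℕ} {u : X}
    (hu : (T ^ N) u = 0) (h : m + N ≤ K) : (T ^ K) (S^[m] u) = 0 := by
  rw [← Nat.sub_add_cancel (le_of_add_le_left h), pow_add, mul_apply_eq_comp,
    pow_apply_iterate_of_le hTS le_rfl, Nat.sub_self, iterate_zero_apply]
  exact pow_apply_eq_zero_of_le hu (by omega)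

theorem norm_iterate_le (hS : ∀ y, ‖S y‖ ≤ ‖y‖) (m : ℕ) (y : X) : ‖S^[m] y‖ ≤ ‖y‖ := by
  induction m with
  | zero => rfl
  | succ m ih => exact (iterate_succ_apply' S m y ▸ hS _).trans ih

theorem pow_apply_add_sum_smul_iterate (hTS : LeftInverse T S) {N : ℕ} {u v : X}
    (hu : (T ^ N) u = 0) (hv : (T ^ N) v = 0) {m : ℕ → ℕ} (hm0 : N ≤ m 0)
    (hm : ∀ i j, i < j → m i + N ≤ m j) (c : ℕ → 𝕜) {j q : ℕ} (hjq : j < q) :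
    (T ^ m j) (v + ∑ i ∈ range q, c i • S^[m i] u) =
      c j • u + ∑ i ∈ Ico (j + 1) q, c i • S^[m i - m j] u := by
  have hmj : N ≤ m j := by
    rcases j.eq_zero_or_pos with rfl | hj
    exacts [hm0, le_of_add_le_right (hm 0 j hj)]
  have hmono : ∀ i, j ≤ i → m j ≤ m i := fun i hi =>
    hi.eq_or_lt.elim (fun h => h ▸ le_rfl) fun h => le_of_add_le_left (hm j i h)
  rw [map_add, pow_apply_eq_zero_of_le hv hmj, zero_add, map_sum,
    ← sum_range_add_sum_Ico _ hjq, sum_range_succ, sum_eq_zero, zero_add]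
  · simp only [map_smul]
    rw [pow_apply_iterate_of_le hTS le_rfl, Nat.sub_self, iterate_zero_apply]
    refine congrArg _ (sum_congr rfl fun i hi => ?_)
    rw [pow_apply_iterate_of_le hTS (hmono i (Nat.le_of_succ_le (mem_Ico.1 hi).1))]
  · intro i hi
    rw [map_smul, pow_apply_iterate_eq_zero hTS hu (hm i j (mem_range.1 hi)), smul_zero]

theorem sum_range_pow_le_two {r : ℝ} (hr0 : 0 ≤ r) (hr : r ≤ 1 / 2) (q : ℕ) :
    ∑ i ∈ range q, r ^ i ≤ 2 := by
  rw [range_eq_Ico]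
  refine (geom_sum_Ico_le_of_lt_one hr0 (by linarith)).trans ?_
  rw [pow_zero, div_le_iff₀ (by linarith)]
  linarith

theorem sum_Ico_pow_sub_le {r : ℝ} (hr0 : 0 ≤ r) (hr : r ≤ 1 / 2) (j q : ℕ) :
    ∑ i ∈ Ico (j + 1) q, r ^ (i - j) ≤ 2 * r := by
  rw [sum_Ico_eq_sum_range]
  calc ∑ t ∈ range (q - (j + 1)), r ^ (j + 1 + t - j)
      = r * ∑ t ∈ range (q - (j + 1)), r ^ t := by
        rw [mul_sum]
        exact sum_congr rfl fun t _ => by rw [show j + 1 + t - j = t + 1 by omega, pow_succ']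
    _ ≤ r * 2 := by gcongr; exact sum_range_pow_le_two hr0 hr _
    _ = 2 * r := mul_comm _ _

theorem norm_sum_smul_iterate_le (hS : ∀ y, ‖S y‖ ≤ ‖y‖) (u : X) (m : ℕ → ℕ) {c : ℕ → 𝕜}
    {C r : ℝ} (hr0 : 0 ≤ r) (hr : r ≤ 1 / 2) (hc : ∀ i, ‖c i‖ ≤ C * r ^ i) (q : ℕ) :
    ‖∑ i ∈ range q, c i • S^[m i] u‖ ≤ 2 * C * ‖u‖ := by
  have hC : 0 ≤ C := by simpa using (norm_nonneg _).trans (hc 0)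
  calc ‖∑ i ∈ range q, c i • S^[m i] u‖ ≤ ∑ i ∈ range q, C * r ^ i * ‖u‖ := by
        refine (norm_sum_le _ _).trans (sum_le_sum fun i _ => ?_)
        rw [norm_smul]
        exact mul_le_mul (hc i) (norm_iterate_le hS _ u) (norm_nonneg _) (by positivity)
    _ = C * ‖u‖ * ∑ i ∈ range q, r ^ i := by
        rw [mul_sum]; exact sum_congr rfl fun i _ => by ring
    _ ≤ C * ‖u‖ * 2 := by gcongr; exact sum_range_pow_le_two hr0 hr q
    _ = 2 * C * ‖u‖ := by ring

theorem norm_smul_add_sum_smul_iterate_sub_le (hS : ∀ y, ‖S y‖ ≤ ‖y‖) (u : X) (p : ℕ → ℕ)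
    {c : 𝕜} {d : ℕ → 𝕜} {α r : ℝ} (hr0 : 0 ≤ r) (hr : r ≤ 1 / 2) (hc : ‖c - 1‖ ≤ α) {j q : ℕ}
    (hd : ∀ i ∈ Ico (j + 1) q, ‖d i‖ ≤ r ^ (i - j)) :
    ‖c • u + ∑ i ∈ Ico (j + 1) q, d i • S^[p i] u - u‖ ≤ (α + 2 * r) * ‖u‖ := by
  have htail : ‖∑ i ∈ Ico (j + 1) q, d i • S^[p i] u‖ ≤ 2 * r * ‖u‖ := by
    refine (norm_sum_le _ _).trans ?_
    calc ∑ i ∈ Ico (j + 1) q, ‖d i • S^[p i] u‖ ≤ ∑ i ∈ Ico (j + 1) q, r ^ (i - j) * ‖u‖ := by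
          refine sum_le_sum fun i hi => ?_
          rw [norm_smul]
          exact mul_le_mul (hd i hi) (norm_iterate_le hS _ u) (norm_nonneg _) (by positivity)
      _ ≤ 2 * r * ‖u‖ := by
          rw [← sum_mul]; gcongr; exact sum_Ico_pow_sub_le hr0 hr j q
  calc ‖c • u + ∑ i ∈ Ico (j + 1) q, d i • S^[p i] u - u‖
      = ‖(c - 1) • u + ∑ i ∈ Ico (j + 1) q, d i • S^[p i] u‖ := by rw [sub_smul, one_smul]; abel_nf
    _ ≤ α * ‖u‖ + 2 * r * ‖u‖ := by
        refine (norm_add_le _ _).trans (add_le_add ?_ htail)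
        rw [norm_smul]; gcongr
    _ = (α + 2 * r) * ‖u‖ := by ring

theorem norm_pow_smul_apply_sub_le (hTS : LeftInverse T S) (hS : ∀ y, ‖S y‖ ≤ ‖y‖)
    {N L : ℕ} {u v : X} (hu : (T ^ N) u = 0) (hv : (T ^ N) v = 0) (hNL : N ≤ L) (hL : 0 < L)
    {m : ℕ → ℕ} (hm0 : L ≤ m 0) (hm : ∀ i j, i ≤ j → m i + L * (j - i) ≤ m j)
    {a : ℝ} (ha : 1 ≤ a) (hr : a⁻¹ ^ L ≤ 1 / 2) {Λ : ℕ → ℝ} (hΛa : ∀ i, a ≤ Λ i)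
    (hΛ : Monotone Λ) {η l : ℝ} {j q : ℕ} (hjq : j < q) (hΛl : Λ j ≤ l) (hlΛ : l ≤ Λ (j + 1))
    (hΛsucc : Λ (j + 1) = Λ j * exp (η / m j)) :
    ‖(((l : 𝕜) • T) ^ m j) (v + ∑ i ∈ range q, (((Λ i ^ m i)⁻¹ : ℝ) : 𝕜) • S^[m i] u) - u‖ ≤
      (exp η - 1 + 2 * a⁻¹ ^ L) * ‖u‖ := by
  have hΛ0 : ∀ i, 0 < Λ i := fun i => one_pos.trans_le (ha.trans (hΛa i))
  have hl0 : 0 ≤ l := (hΛ0 j).le.trans hΛl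
  have hgap : ∀ i i', i < i' → m i + N ≤ m i' := fun i i' h =>
    (hm i i' h.le).trans' (by gcongr; exact hNL.trans (Nat.le_mul_of_pos_right L (by omega)))
  have hmj : L ≤ m j := (Nat.le_add_right _ _).trans ((hm 0 j j.zero_le).trans' (by gcongr))
  have hcoe : ∀ x : ℝ, (l : 𝕜) ^ m j * (x : 𝕜) = ((l ^ m j * x : ℝ) : 𝕜) := fun x => by
    push_cast; rfl
  rw [smul_pow, smul_apply, pow_apply_add_sum_smul_iterate hTS hu hv (hNL.trans hm0) hgap _ hjq,
    smul_add, smul_sum]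
  simp only [smul_smul, hcoe]
  refine norm_smul_add_sum_smul_iterate_sub_le hS u _ (by positivity) hr ?_ fun i hi => ?_
  · rw [← RCLike.ofReal_one, ← RCLike.ofReal_sub, RCLike.norm_ofReal]
    exact abs_pow_mul_inv_pow_sub_one_le (by omega) (hΛ0 j) hΛl (hΛsucc ▸ hlΛ)
  · have hji : j ≤ i := by have := (mem_Ico.1 hi).1; omega
    rw [RCLike.norm_ofReal, abs_of_nonneg (by have := hΛ0 i; positivity), ← pow_mul]
    refine (pow_mul_inv_pow_le (zero_lt_one.trans_le ha) (hΛa i) hl0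
      (hlΛ.trans (hΛ (mem_Ico.1 hi).1)) ((Nat.le_add_right _ _).trans (hm j i hji))).trans ?_
    exact pow_le_pow_of_le_one (by positivity) (inv_le_one_of_one_le₀ ha)
      (by have := hm j i hji; omega)

theorem exists_near_forall_orbit_near {k : ℕ → ℕ} (hk : StrictMono k)
    (hdiv : ¬ Summable fun n => (1 : ℝ) / k n) (hTS : LeftInverse T S) (hS : ∀ y, ‖S y‖ ≤ ‖y‖)
    {a : ℝ} (ha : 1 < a) (b : ℝ) {N : ℕ} {u v : X} (hu : (T ^ N) u = 0) (hv : (T ^ N) v = 0)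
    {ε δ : ℝ} (hε : 0 < ε) (hδ : 0 < δ) :
    ∃ x, ‖x - v‖ ≤ ε ∧ ∀ l ∈ Set.Icc a b, ∃ n, ‖(((l : 𝕜) • T) ^ k n) x - u‖ ≤ δ := by
  have ha0 : 0 < a := zero_lt_one.trans ha
  have hdecay : Tendsto (fun n => a⁻¹ ^ n) atTop (𝓝 0) :=
    tendsto_pow_atTop_nhds_zero_of_lt_one (by positivity) (inv_lt_one_of_one_lt₀ ha)
  have hdecay' : Tendsto (fun n => 2 * a⁻¹ ^ n * ‖u‖) atTop (𝓝 0) := by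
    simpa using (hdecay.const_mul 2).mul_const ‖u‖
  obtain ⟨η, hη, hηu⟩ : ∃ η, 0 < η ∧ (exp η - 1) * ‖u‖ ≤ δ / 2 := by
    set t := δ / (2 * (‖u‖ + 1))
    have ht : 0 < t := by positivity
    refine ⟨log (1 + t), log_pos (by linarith), ?_⟩
    rw [exp_log (by linarith), add_sub_cancel_left]
    calc t * ‖u‖ ≤ t * (‖u‖ + 1) := by gcongr; linarith
      _ = δ / 2 := by simp only [t]; field_simp
  obtain ⟨L, hLr, hLu, hNL⟩ :=
    ((hdecay.eventually (gt_mem_nhds (by norm_num : (0 : ℝ) < 1 / 2))).and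
      ((hdecay'.eventually (gt_mem_nhds (half_pos hδ))).and (eventually_ge_atTop (N + 1)))).exists
  obtain ⟨n₀, hn₀, hLn₀⟩ := (((hdecay'.comp hk.tendsto_atTop).eventually (gt_mem_nhds hε)).and
    (eventually_ge_atTop L)).exists
  set m := fun j => k (n₀ + L * j)
  have hm : ∀ i j, i ≤ j → m i + L * (j - i) ≤ m j := fun i j hij => by
    obtain ⟨d, rfl⟩ := Nat.exists_eq_add_of_le hij
    simpa [m, mul_add, add_assoc, add_comm] using hk.add_le_nat (L * d) (n₀ + L * i)
  have hm0 : L ≤ m 0 := by simpa [m] using hLn₀.trans hk.le_apply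
  obtain ⟨q, hq⟩ :=
    exists_lt_sum_one_div_comp_add_mul hk hdiv (n₀ := n₀) (L := L) (by omega) (by omega) (b / η)
  set Λ := fun j => a * exp (η * ∑ i ∈ range j, (1 : ℝ) / m i)
  have hΛa : ∀ i, a ≤ Λ i := fun i =>
    le_mul_of_one_le_right ha0.le (one_le_exp (by positivity))
  have hΛsucc : ∀ j, Λ (j + 1) = Λ j * exp (η / m j) := fun j => by
    simp only [Λ, sum_range_succ, mul_add, exp_add, mul_one_div, mul_assoc]
  have hΛ : Monotone Λ := monotone_nat_of_le_succ fun j => by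
    rw [hΛsucc]
    exact le_mul_of_one_le_right (ha0.le.trans (hΛa j)) (one_le_exp (by positivity))
  have hbΛ : b < Λ q := by
    calc b < η * ∑ i ∈ range q, (1 : ℝ) / m i := (div_lt_iff₀' hη).1 hq
      _ < exp (η * ∑ i ∈ range q, (1 : ℝ) / m i) := (lt_add_one _).trans_le (add_one_le_exp _)
      _ ≤ Λ q := le_mul_of_one_le_left (exp_pos _).le ha.le
  refine ⟨v + ∑ i ∈ range q, (((Λ i ^ m i)⁻¹ : ℝ) : 𝕜) • S^[m i] u, ?_, ?_⟩
  · rw [add_sub_cancel_left]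
    refine (norm_sum_smul_iterate_le hS u m (by positivity) hLr.le (fun i => ?_) q).trans hn₀.le
    rw [RCLike.norm_ofReal, abs_of_nonneg (by have := hΛa i; positivity), ← pow_mul, ← pow_add]
    calc (Λ i ^ m i)⁻¹ ≤ (a ^ m i)⁻¹ := by gcongr; exact hΛa i
      _ ≤ (a ^ (k n₀ + L * i))⁻¹ := by
          refine inv_pow_le_inv_pow_of_le ha.le ?_
          simpa [m, add_comm] using hk.add_le_nat (L * i) n₀
      _ = a⁻¹ ^ (k n₀ + L * i) := (inv_pow _ _).symm
  · rintro l ⟨hal, hlb⟩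
    obtain ⟨j, hjq, hΛl, hlΛ⟩ := exists_lt_le_lt_succ (f := Λ) (by simpa [Λ] using hal)
      (hlb.trans_lt hbΛ)
    refine ⟨n₀ + L * j, (norm_pow_smul_apply_sub_le hTS hS hu hv (by omega) (by omega) hm0 hm
      ha.le hLr.le hΛa hΛ hjq hΛl hlΛ.le (hΛsucc j)).trans ?_⟩
    linarith

theorem isOpen_setOf_forall_exists_pow_apply_mem (k : ℕ → ℕ) (T : X →L[𝕜] X) {I : Set ℝ}
    (hI : IsCompact I) {U : Set X} (hU : IsOpen U) :
    IsOpen {x | ∀ l ∈ I, ∃ n, (((l : 𝕜) • T) ^ k n) x ∈ U} := by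
  refine isOpen_iff_eventually.2 fun x hx =>
    hI.eventually_forall_of_forall_eventually fun l hl => ?_
  obtain ⟨n, hn⟩ := hx l hl
  have hcont : Continuous fun p : X × ℝ => (((p.2 : 𝕜) • T) ^ k n) p.1 := by
    simp only [smul_pow, smul_apply]
    fun_prop
  exact (hcont.continuousAt.eventually (hU.mem_nhds hn)).mono fun p hp => ⟨n, hp⟩

theorem dense_setOf_forall_exists_pow_apply_mem {k : ℕ → ℕ} (hk : StrictMono k)
    (hdiv : ¬ Summable fun n => (1 : ℝ) / k n) (hTS : LeftInverse T S) (hS : ∀ y, ‖S y‖ ≤ ‖y‖)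
    (hD : Dense {u | ∃ N, (T ^ N) u = 0}) {a : ℝ} (ha : 1 < a) (b : ℝ) {U : Set X}
    (hU : IsOpen U) (hne : U.Nonempty) :
    Dense {x | ∀ l ∈ Set.Icc a b, ∃ n, (((l : 𝕜) • T) ^ k n) x ∈ U} := by
  obtain ⟨y, hy⟩ := hne
  obtain ⟨ρ, hρ, hball⟩ := Metric.isOpen_iff.1 hU y hy
  obtain ⟨u, ⟨Nu, hu⟩, hyu⟩ := hD.exists_dist_lt y (half_pos hρ)
  refine Metric.dense_iff.2 fun z r hr => ?_
  obtain ⟨v, ⟨Nv, hv⟩, hzv⟩ := hD.exists_dist_lt z (half_pos hr)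
  obtain ⟨x, hxv, hx⟩ := exists_near_forall_orbit_near (𝕜 := 𝕜) hk hdiv hTS hS ha b
    (pow_apply_eq_zero_of_le hu (Nat.le_add_right Nu Nv))
    (pow_apply_eq_zero_of_le hv (Nat.le_add_left Nv Nu))
    (by positivity : 0 < r / 4) (by positivity : 0 < ρ / 4)
  refine ⟨x, ?_, fun l hl => ?_⟩
  · rw [Metric.mem_ball, dist_eq_norm]
    rw [dist_comm, dist_eq_norm] at hzv
    linarith [norm_sub_le_norm_sub_add_norm_sub x v z]
  · obtain ⟨n, hn⟩ := hx l hl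
    refine ⟨n, hball ?_⟩
    rw [Metric.mem_ball, dist_eq_norm]
    rw [dist_comm, dist_eq_norm] at hyu
    linarith [norm_sub_le_norm_sub_add_norm_sub ((((l : 𝕜) • T) ^ k n) x) u y]

theorem exists_mem_Icc_one_add_inv_of_one_lt {l : ℝ} (hl : 1 < l) :
    ∃ m : ℕ, l ∈ Set.Icc (1 + 1 / ((m : ℝ) + 1)) (m + 1) := by
  obtain ⟨m, hm⟩ := exists_nat_ge (max (1 / (l - 1)) l)
  have hm1 : max (1 / (l - 1)) l ≤ m + 1 := hm.trans (le_add_of_nonneg_right zero_le_one)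
  have h1 : 1 / ((m : ℝ) + 1) ≤ l - 1 :=
    (one_div_le (b := (m : ℝ) + 1) (sub_pos.2 hl) (by positivity)).1 ((le_max_left _ _).trans hm1)
  exact ⟨m, le_sub_iff_add_le'.1 h1, (le_max_right _ _).trans hm1⟩

theorem residual_biInter_Ioi_dense_range_pow_apply [CompleteSpace X] [SeparableSpace X]
    {k : ℕ → ℕ} (hk : StrictMono k)
    (hdiv : ¬ Summable fun n => (1 : ℝ) / k n) (hTS : LeftInverse T S) (hS : ∀ y, ‖S y‖ ≤ ‖y‖)
    (hD : Dense {u | ∃ N, (T ^ N) u = 0}) :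
    (⋂ l ∈ Set.Ioi (1 : ℝ), {x | Dense (Set.range fun n => (((l : 𝕜) • T) ^ k n) x)}) ∈
      residual X := by
  have hres : (⋂ U ∈ countableBasis X, ⋂ m : ℕ,
      {x | ∀ l ∈ Set.Icc (1 + 1 / ((m : ℝ) + 1)) (m + 1), ∃ n, (((l : 𝕜) • T) ^ k n) x ∈ U}) ∈
      residual X :=
    (countable_bInter_mem (countable_countableBasis X)).2 fun U hU =>
      countable_iInter_mem.2 fun m => residual_of_dense_open
        (isOpen_setOf_forall_exists_pow_apply_mem k T isCompact_Icc
          (isOpen_of_mem_countableBasis hU))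
        (dense_setOf_forall_exists_pow_apply_mem hk hdiv hTS hS hD
          (lt_add_of_pos_right 1 (by positivity)) _ (isOpen_of_mem_countableBasis hU)
          (nonempty_of_mem_countableBasis hU))
  refine mem_of_superset hres fun x hx => ?_
  simp only [Set.mem_iInter, Set.mem_ofPred_eq] at hx ⊢
  intro l hl
  refine (isBasis_countableBasis X).dense_iff.2 fun U hU _ => ?_
  obtain ⟨m, hm⟩ := exists_mem_Icc_one_add_inv_of_one_lt hl
  obtain ⟨n, hn⟩ := hx U hU m l hm
  exact ⟨_, hn, n, rfl⟩

end Operators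

section BackwardShift

variable {𝕜 : Type*} [RCLike 𝕜]

noncomputable def rightShift (y : ℓ²(ℕ, 𝕜)) : ℓ²(ℕ, 𝕜) :=
  ⟨fun | 0 => 0 | n + 1 => y n,
    (memℓp_gen_iff (by norm_num)).2 <|
      (summable_nat_add_iff 1).1 ((memℓp_gen_iff (by norm_num)).1 y.2)⟩

theorem norm_rightShift (y : ℓ²(ℕ, 𝕜)) : ‖rightShift y‖ = ‖y‖ := by
  have hp : 0 < (2 : ℝ≥0∞).toReal := by norm_num
  have h := lp.norm_rpow_eq_tsum hp (rightShift y)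
  rw [((memℓp_gen_iff hp).1 (rightShift y).2).tsum_eq_zero_add] at h
  change _ = ‖(0 : 𝕜)‖ ^ _ + ∑' n, ‖y n‖ ^ _ at h
  rwa [← lp.norm_rpow_eq_tsum hp y, norm_zero, Real.zero_rpow hp.ne', zero_add,
    Real.rpow_left_inj (norm_nonneg _) (norm_nonneg _) hp.ne'] at h

theorem leftInverse_rightShift {B : ℓ²(ℕ, 𝕜) →L[𝕜] ℓ²(ℕ, 𝕜)} (hB : ∀ x n, B x n = x (n + 1)) :
    LeftInverse B rightShift :=
  fun _ => lp.ext (funext fun n => hB _ n)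

theorem pow_apply_of_backward_shift {B : ℓ²(ℕ, 𝕜) →L[𝕜] ℓ²(ℕ, 𝕜)} (hB : ∀ x n, B x n = x (n + 1))
    (m : ℕ) (x : ℓ²(ℕ, 𝕜)) (n : ℕ) : (B ^ m) x n = x (n + m) := by
  induction m generalizing x with
  | zero => rfl
  | succ m ih => rw [pow_succ, mul_apply_eq_comp, ih, hB, add_assoc]

theorem dense_setOf_exists_pow_apply_eq_zero {B : ℓ²(ℕ, 𝕜) →L[𝕜] ℓ²(ℕ, 𝕜)}
    (hB : ∀ x n, B x n = x (n + 1)) : Dense {u | ∃ N, (B ^ N) u = 0} := by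
  intro x
  refine mem_closure_of_tendsto (lp.hasSum_single (by norm_num) x).tendsto_sum_nat
    (Eventually.of_forall fun N => ⟨N, lp.ext (funext fun n => ?_)⟩)
  rw [pow_apply_of_backward_shift hB, lp.coeFn_sum, Finset.sum_apply]
  exact sum_eq_zero fun i hi => by
    rw [lp.single_apply, Pi.single_apply, if_neg (by have := mem_range.1 hi; omega)]

instance : SeparableSpace ℓ²(ℕ, 𝕜) := by
  let b : HilbertBasis ℕ 𝕜 ℓ²(ℕ, 𝕜) := default
  have h := ((Set.countable_range b).isSeparable.span (R := 𝕜)).closure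
  rw [← Submodule.topologicalClosure_coe, b.dense_span, Submodule.top_coe] at h
  exact isSeparable_univ_iff.1 h

end BackwardShift

theorem stmt_11_general (k : ℕ → ℕ) (hk : StrictMono k)
    (hdiv : ¬ Summable (fun n => (1 : ℝ) / k n))
    (B : lp (fun _ : ℕ => ℂ) 2 →L[ℂ] lp (fun _ : ℕ => ℂ) 2)
    (hB : ∀ (x : lp (fun _ : ℕ => ℂ) 2) (n : ℕ), B x n = x (n + 1)) :
    (⋂ l ∈ Set.Ioi (1:ℝ),
      {x : lp (fun _ : ℕ => ℂ) 2 |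
        Dense (Set.range fun n => (((l : ℂ) • B) ^ k n) x)})
      ∈ residual (lp (fun _ : ℕ => ℂ) 2) ∧
    (⋂ l ∈ Set.Ioi (1:ℝ),
      {x : lp (fun _ : ℕ => ℂ) 2 |
        Dense (Set.range fun n => (((l : ℂ) • B) ^ k n) x)}) ≠ ∅ := by
  have hres := residual_biInter_Ioi_dense_range_pow_apply hk hdiv (leftInverse_rightShift hB)
    (fun y => (norm_rightShift y).le) (dense_setOf_exists_pow_apply_eq_zero hB)
  exact ⟨hres, (dense_of_mem_residual hres).nonempty.ne_empty⟩

theorem stmt_11 (k : ℕ → ℕ) (hk : StrictMono k) (hkpos : ∀ n, 0 < k n)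
    (hdiv : ¬ Summable (fun n => (1 : ℝ) / k n))
    (B : lp (fun _ : ℕ => ℂ) 2 →L[ℂ] lp (fun _ : ℕ => ℂ) 2)
    (hB : ∀ (x : lp (fun _ : ℕ => ℂ) 2) (n : ℕ), B x n = x (n + 1)) :
    (⋂ l ∈ Set.Ioi (1:ℝ),
      {x : lp (fun _ : ℕ => ℂ) 2 |
        Dense (Set.range fun n => (((l : ℂ) • B) ^ k n) x)})
      ∈ residual (lp (fun _ : ℕ => ℂ) 2) ∧
    (⋂ l ∈ Set.Ioi (1:ℝ),
      {x : lp (fun _ : ℕ => ℂ) 2 |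
        Dense (Set.range fun n => (((l : ℂ) • B) ^ k n) x)}) ≠ ∅ :=
  stmt_11_general k hk hdiv B hB
end

section
/- Let (kₙ) be a sequence of distinct positive integers, X a complex Banach space, T a bounded operator on X, x ∈ X, and suppose for some real b > 1 the orbit {(bT)^{kₙ}x : n ∈ ℕ} is dense in X. Then for almost every θ ∈ ℝ (with respect to Lebesgue measure), the set {((bT)^{kₙ}x, e^{2πi kₙ θ}) : n ∈ ℕ} is dense in X × 𝕋. -/
/-!
Fix an arc of the circle and a finite-measure set `S` of parameters `θ` for which no point
`𝐞 (f i * θ)` enters the arc. Integrating the kernel `|∑_{a<K} 𝐞 (a t)|²`, which is at most `4/ε²`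
off the arc, over `S` and letting `i → ∞`, the Riemann–Lebesgue lemma kills every nonzero
frequency and leaves `K |S| ≤ 4/ε² |S|` for all `K`, so `|S| = 0`. Running this over a countable
basis `U × V` of `X × 𝕋`, with `i` ranging over the infinitely many indices whose orbit point lies
in `U`, gives density for almost every `θ`.
-/

open MeasureTheory Filter Topology Real FourierTransform ComplexConjugate

lemma Real.fourierChar_surjective : Function.Surjective 𝐞 := fun z =>
  ⟨(z : ℂ).arg / (2 * π), by
    rw [fourierChar_apply', mul_div_cancel₀ _ (by positivity), Circle.exp_arg]⟩

lemma dist_fourierChar_eq_norm_sub_one (s c : ℝ) :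
    dist (𝐞 s) (𝐞 c) = ‖(𝐞 (s - c) : ℂ) - 1‖ := by
  rw [show dist (𝐞 s) (𝐞 c) = dist (𝐞 s : ℂ) (𝐞 c) from rfl, dist_eq_norm, ← one_mul ‖_ - 1‖,
    ← Circle.norm_coe (𝐞 c), ← norm_mul, mul_sub, ← Circle.coe_mul, ← AddChar.map_add_eq_mul,
    add_sub_cancel, mul_one]

section DirichletSum

open Finset

lemma norm_sum_range_fourierChar_le {t ε : ℝ} (hε : 0 < ε) (ht : ε ≤ ‖(𝐞 t : ℂ) - 1‖) (K : ℕ) :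
    ‖∑ a ∈ range K, (𝐞 (a * t) : ℂ)‖ ≤ 2 / ε := by
  have hpow (a : ℕ) : (𝐞 (a * t) : ℂ) = (𝐞 t : ℂ) ^ a := by
    rw [← nsmul_eq_mul, AddChar.map_nsmul_eq_pow, Circle.coe_pow]
  have hgeom : ‖∑ a ∈ range K, (𝐞 (a * t) : ℂ)‖ * ‖(𝐞 t : ℂ) - 1‖ ≤ 2 := by
    rw [← norm_mul]
    simp only [hpow, geom_sum_mul]
    calc _ ≤ ‖(𝐞 t : ℂ) ^ K‖ + ‖(1 : ℂ)‖ := norm_sub_le _ _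
      _ = 2 := by simp [Circle.norm_coe, one_add_one_eq_two]
  rw [le_div_iff₀ hε]
  exact (mul_le_mul_of_nonneg_left ht (norm_nonneg _)).trans hgeom

lemma sum_range_fourierChar_mul_conj (K : ℕ) (t : ℝ) :
    (∑ a ∈ range K, (𝐞 (a * t) : ℂ)) * conj (∑ a ∈ range K, (𝐞 (a * t) : ℂ)) =
      ∑ a ∈ range K, ∑ b ∈ range K, (𝐞 (((a : ℤ) - b : ℤ) * t) : ℂ) := by
  rw [map_sum, sum_mul_sum]
  refine sum_congr rfl fun a _ => sum_congr rfl fun b _ => ?_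
  rw [← Circle.coe_inv_eq_conj, ← AddChar.map_neg_eq_inv, ← Circle.coe_mul,
    ← AddChar.map_add_eq_mul]
  push_cast
  ring_nf

end DirichletSum

lemma tendsto_setIntegral_fourierChar {ι : Type*} {f : ι → ℕ} (hf : Function.Injective f)
    {S : Set ℝ} (hS : MeasurableSet S) (c : ℝ) (h : ℤ) :
    Tendsto (fun i => ∫ θ in S, (𝐞 (h * (f i * θ - c)) : ℂ)) cofinite
      (𝓝 (if h = 0 then (volume.real S : ℂ) else 0)) := by
  split_ifs with hh
  · simpa [hh] using tendsto_const_nhds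
  · have hw : Tendsto (fun i => -((h : ℝ) * f i)) cofinite (cocompact ℝ) := by
      rw [← Metric.cobounded_eq_cocompact, ← tendsto_norm_atTop_iff_cobounded]
      simp only [norm_neg, norm_mul, Real.norm_natCast]
      have hfi : Tendsto (fun i => (f i : ℝ)) cofinite atTop :=
        tendsto_natCast_atTop_atTop.comp (Nat.cofinite_eq_atTop ▸ hf.tendsto_cofinite)
      exact hfi.const_mul_atTop (by simpa using hh)
    have := (Real.tendsto_integral_exp_smul_cocompact
      (S.indicator fun _ => (𝐞 (-(h * c)) : ℂ))).comp hw
    convert this using 2 with i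
    rw [Function.comp_apply, ← integral_indicator hS]
    congr 1 with θ
    by_cases hθ : θ ∈ S
    · simp [hθ, Circle.smul_def, ← Circle.coe_mul, ← AddChar.map_add_eq_mul]
      ring_nf
    · simp [hθ]

open Finset in
lemma volume_eq_zero_of_forall_le_dist_fourierChar {ι : Type*} [Infinite ι] {f : ι → ℕ}
    (hf : Function.Injective f) {c ε : ℝ} (hε : 0 < ε) {S : Set ℝ} (hS : MeasurableSet S)
    (hSfin : volume S ≠ ⊤) (hSE : ∀ θ ∈ S, ∀ i, ε ≤ dist (𝐞 (f i * θ)) (𝐞 c)) :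
    volume S = 0 := by
  set D : ℕ → ι → ℝ → ℂ := fun K i θ => ∑ a ∈ range K, (𝐞 (a * (f i * θ - c)) : ℂ)
  have hbound (K : ℕ) (i : ι) :
      ‖∫ θ in S, D K i θ * conj (D K i θ)‖ ≤ (2 / ε) ^ 2 * volume.real S := by
    refine norm_setIntegral_le_of_norm_le_const hSfin.lt_top fun θ hθ => ?_
    have := norm_sum_range_fourierChar_le hε
      ((hSE θ hθ i).trans_eq (dist_fourierChar_eq_norm_sub_one _ _)) K
    rw [norm_mul, RCLike.norm_conj, ← sq]
    gcongr
  have hlim (K : ℕ) : Tendsto (fun i => ∫ θ in S, D K i θ * conj (D K i θ)) cofinite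
      (𝓝 (K * volume.real S)) := by
    have hint (h : ℤ) (i : ι) : IntegrableOn (fun θ => (𝐞 (h * (f i * θ - c)) : ℂ)) S :=
      IntegrableOn.of_bound hSfin.lt_top (by fun_prop : Continuous _).aestronglyMeasurable 1
        (ae_of_all _ fun _ => (Circle.norm_coe _).le)
    simp only [D, sum_range_fourierChar_mul_conj]
    simp_rw [integral_finsetSum _ fun a _ => integrable_finsetSum _ fun b _ => hint _ _,
      integral_finsetSum _ fun b _ => hint _ _]
    have := tendsto_finsetSum (range K) fun a _ => tendsto_finsetSum (range K) fun b _ =>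
      tendsto_setIntegral_fourierChar hf hS c ((a : ℤ) - b)
    convert this using 2
    simp only [sub_eq_zero, Nat.cast_inj, sum_ite_eq, mem_range]
    rw [sum_congr rfl fun a ha => if_pos (mem_range.1 ha)]
    simp
  have hK (K : ℕ) : K * volume.real S ≤ (2 / ε) ^ 2 * volume.real S := by
    have := le_of_tendsto' (hlim K).norm (hbound K)
    rwa [norm_mul, Complex.norm_natCast, Complex.norm_real,
      Real.norm_of_nonneg measureReal_nonneg] at this
  obtain ⟨K, hK'⟩ := exists_nat_gt ((2 / ε) ^ 2)
  have : volume.real S = 0 := by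
    nlinarith [hK K, measureReal_nonneg (μ := volume) (s := S)]
  exact (measureReal_eq_zero_iff hSfin).1 this

lemma ae_exists_fourierChar_mem {ι : Type*} [Infinite ι] {f : ι → ℕ} (hf : Function.Injective f)
    {V : Set Circle} (hV : IsOpen V) (hVne : V.Nonempty) :
    ∀ᵐ θ, ∃ i, 𝐞 (f i * θ) ∈ V := by
  obtain ⟨z, hz⟩ := hVne
  obtain ⟨c, rfl⟩ := fourierChar_surjective z
  obtain ⟨ε, hε, hball⟩ := Metric.isOpen_iff.1 hV _ hz
  refine ae_of_forall_measure_lt_top_ae_restrict _ fun S hS hSfin => ?_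
  set E := {θ | ∀ i, ε ≤ dist (𝐞 (f i * θ)) (𝐞 c)}
  have hE : IsClosed E := by
    simp only [E, Set.ofPred_forall]
    exact isClosed_iInter fun i => isClosed_le continuous_const (by fun_prop)
  have hES : volume (E ∩ S) = 0 :=
    volume_eq_zero_of_forall_le_dist_fourierChar hf hε (hE.measurableSet.inter hS)
      (measure_ne_top_of_subset Set.inter_subset_right hSfin.ne) fun θ hθ => hθ.1
  rw [ae_iff, Measure.restrict_apply' hS]
  refine measure_mono_null (fun θ ⟨hθ, hθS⟩ => ?_) hES
  exact ⟨fun i => not_lt.1 fun h => hθ ⟨i, hball h⟩, hθS⟩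

lemma ae_dense_of_forall_isOpen {α Y : Type*} [MeasurableSpace α] {μ : Measure α}
    [TopologicalSpace Y] [SecondCountableTopology Y] {s : α → Set Y}
    (h : ∀ V : Set Y, IsOpen V → V.Nonempty → ∀ᵐ a ∂μ, (V ∩ s a).Nonempty) :
    ∀ᵐ a ∂μ, Dense (s a) := by
  obtain ⟨B, hBc, -, hB⟩ := TopologicalSpace.exists_countable_basis Y
  have : ∀ᵐ a ∂μ, ∀ V ∈ B, V.Nonempty → (V ∩ s a).Nonempty := by
    refine (ae_ball_iff hBc).2 fun V hV => ?_
    by_cases hne : V.Nonempty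
    · filter_upwards [h V (hB.isOpen hV) hne] with a ha using fun _ => ha
    · exact ae_of_all _ fun _ h' => absurd h' hne
  filter_upwards [this] with a ha
  exact hB.dense_iff.2 ha

lemma DenseRange.infinite_preimage {ι X : Type*} [TopologicalSpace X] [T1Space X]
    [∀ x : X, NeBot (𝓝[≠] x)] {v : ι → X} (hv : DenseRange v) {U : Set X} (hU : IsOpen U)
    (hUne : U.Nonempty) : (v ⁻¹' U).Infinite := by
  intro hfin
  obtain ⟨_, hU', ⟨i, rfl⟩, hi⟩ :=
    (hv.sdiff_finite (hfin.image v)).inter_open_nonempty U hU hUne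
  exact hi ⟨i, hU', rfl⟩

theorem ae_dense_range_prod_fourierChar {ι X : Type*} [TopologicalSpace X]
    [SecondCountableTopology X] {v : ι → X}
    (hv : ∀ U, IsOpen U → U.Nonempty → (v ⁻¹' U).Infinite) {f : ι → ℕ}
    (hf : Function.Injective f) :
    ∀ᵐ θ, Dense (Set.range fun i => (v i, 𝐞 (f i * θ))) := by
  refine ae_dense_of_forall_isOpen fun W hW ⟨⟨y, z⟩, hyz⟩ => ?_
  obtain ⟨U, V, hU, hV, hy, hz, hUV⟩ := isOpen_prod_iff.1 hW y z hyz
  have : Infinite ↥(v ⁻¹' U) := Set.infinite_coe_iff.2 (hv U hU ⟨y, hy⟩)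
  have hfU : Function.Injective fun i : v ⁻¹' U => f i := hf.comp Subtype.val_injective
  filter_upwards [ae_exists_fourierChar_mem hfU hV ⟨z, hz⟩] with θ ⟨⟨i, hi⟩, hθ⟩
  exact ⟨(v i, _), hUV ⟨hi, hθ⟩, i, rfl⟩

theorem stmt_13_general (X : Type*) [NormedAddCommGroup X] [NormedSpace ℂ X]
    (T : X →L[ℂ] X) (k : ℕ → ℕ) (hkinj : Function.Injective k)
    (x : X) (b : ℝ)
    (hdense : Dense (Set.range fun n => (((b : ℂ) • T) ^ k n) x)) :
    ∀ᵐ θ ∂(MeasureTheory.volume : MeasureTheory.Measure ℝ),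
      Dense (Set.range fun n =>
        ((((b : ℂ) • T) ^ k n) x, Circle.exp (2 * Real.pi * k n * θ))) := by
  have : TopologicalSpace.SeparableSpace X := .of_denseRange _ hdense
  have hv (U : Set X) (hU : IsOpen U) (hUne : U.Nonempty) :
      ((fun n => (((b : ℂ) • T) ^ k n) x) ⁻¹' U).Infinite := by
    rcases subsingleton_or_nontrivial X with _ | _
    · simpa [hUne.eq_univ] using Set.infinite_univ
    · have := perfectSpace_of_module ℂ X
      exact DenseRange.infinite_preimage hdense hU hUne
  simpa only [fourierChar_apply', mul_assoc] using ae_dense_range_prod_fourierChar hv hkinj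

theorem stmt_13 (X : Type*) [NormedAddCommGroup X] [NormedSpace ℂ X] [CompleteSpace X]
    (T : X →L[ℂ] X) (k : ℕ → ℕ) (hkpos : ∀ n, 0 < k n) (hkinj : Function.Injective k)
    (x : X) (b : ℝ) (hb : 1 < b)
    (hdense : Dense (Set.range fun n => (((b : ℂ) • T) ^ k n) x)) :
    ∀ᵐ θ ∂(MeasureTheory.volume : MeasureTheory.Measure ℝ),
      Dense (Set.range fun n =>
        ((((b : ℂ) • T) ^ k n) x, Circle.exp (2 * Real.pi * k n * θ))) :=
  stmt_13_general X T k hkinj x b hdense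
end

section
/- Let (kₙ) be a strictly increasing sequence of positive integers with ∑ₙ 1/kₙ < ∞, let 1 < μ₀ < M₀, ε ∈ (0,1), and (wₙ) any sequence of complex numbers. If N₀ is such that M₀·∑_{v ≥ N₀} (((1+ε)/(1−ε))^{1/k_v} − 1) < M₀ − μ₀, then [μ₀, M₀] is not covered by the union over v ≥ N₀ of the sets {λ ∈ [μ₀,M₀] : |λ^{k_v}·w_v − 1| < ε}. -/
/-!
Write `r = (1 + ε) / (1 - ε)`. If `λ` and `λ'` both satisfy `|λ^k w - 1| < ε`, then
`(λ' / λ)^k < r`, so the set of such `λ` in `[μ₀, M₀]` lies in an interval of multiplicative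
width `r^{1/k}`, hence has length at most `M₀ (r^{1/k} - 1)`. Bernoulli's inequality gives
`r^{1/k} - 1 ≤ (r - 1) / k`, so these lengths are summable when `∑ 1/k_v` is, and
countable subadditivity of Lebesgue measure contradicts `M₀ ∑_v (r^{1/k_v} - 1) < M₀ - μ₀`.
-/

open MeasureTheory

theorem one_le_one_add_div_one_sub {ε : ℝ} (hε0 : 0 ≤ ε) (hε1 : ε < 1) :
    1 ≤ (1 + ε) / (1 - ε) := by
  rw [le_div_iff₀ (by linarith)]
  linarith

theorem Real.volume_le_of_forall_le_mul {S : Set ℝ} {M q : ℝ} (hq : 1 ≤ q)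
    (hM : ∀ x ∈ S, x ≤ M) (hS : ∀ x ∈ S, ∀ y ∈ S, y ≤ x * q) :
    volume S ≤ ENNReal.ofReal (M * (q - 1)) := by
  refine (Real.volume_le_diam S).trans (Metric.ediam_le fun x hx y hy => ?_)
  rw [edist_dist, Real.dist_eq]
  refine ENNReal.ofReal_le_ofReal (abs_sub_le_iff.2 ⟨?_, ?_⟩)
  · nlinarith [hS y hy x hx, hM y hy]
  · nlinarith [hS x hx y hy, hM x hx]

section RCLike

variable {𝕜 : Type*} [RCLike 𝕜]

theorem lt_mul_rpow_of_norm_pow_mul_sub_one_lt {K : ℕ} (hK : K ≠ 0) {ε x y : ℝ} (hε : ε < 1)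
    (hx : 0 ≤ x) (hy : 0 ≤ y) {w : 𝕜}
    (hxw : ‖(x : 𝕜) ^ K * w - 1‖ < ε) (hyw : ‖(y : 𝕜) ^ K * w - 1‖ < ε) :
    y < x * ((1 + ε) / (1 - ε)) ^ ((1 : ℝ) / K) := by
  have hnorm : ∀ t : ℝ, 0 ≤ t → ‖(t : 𝕜) ^ K * w - 1‖ < ε → |t ^ K * ‖w‖ - 1| < ε :=
    fun t ht h => by
      have := abs_norm_sub_norm_le ((t : 𝕜) ^ K * w) 1
      rw [norm_mul, norm_pow, RCLike.norm_ofReal, abs_of_nonneg ht, norm_one] at this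
      exact this.trans_lt h
  have hx_lower : 1 - ε < x ^ K * ‖w‖ := by linarith [(abs_sub_lt_iff.1 (hnorm x hx hxw)).2]
  have hy_upper : y ^ K * ‖w‖ < 1 + ε := by linarith [(abs_sub_lt_iff.1 (hnorm y hy hyw)).1]
  have hε0 : 0 < ε := (norm_nonneg _).trans_lt hxw
  have h1ε : 0 < 1 - ε := by linarith
  have hw : 0 < ‖w‖ := pos_of_mul_pos_right (h1ε.trans hx_lower) (pow_nonneg hx K)
  have hr : 0 ≤ (1 + ε) / (1 - ε) := by positivity
  have hpow : y ^ K < (x * ((1 + ε) / (1 - ε)) ^ ((1 : ℝ) / K)) ^ K := by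
    rw [mul_pow, one_div, Real.rpow_inv_natCast_pow hr hK, ← mul_div_assoc, lt_div_iff₀ h1ε]
    refine lt_of_mul_lt_mul_right ?_ hw.le
    calc y ^ K * (1 - ε) * ‖w‖ = y ^ K * ‖w‖ * (1 - ε) := by ring
      _ < (1 + ε) * (1 - ε) := by gcongr
      _ < (1 + ε) * (x ^ K * ‖w‖) := by gcongr
      _ = x ^ K * (1 + ε) * ‖w‖ := by ring
  exact lt_of_pow_lt_pow_left₀ K (mul_nonneg hx (Real.rpow_nonneg hr _)) hpow

theorem volume_setOf_norm_pow_mul_sub_one_lt_le {K : ℕ} (hK : K ≠ 0) {μ M ε : ℝ} (hμ : 0 ≤ μ)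
    (hε0 : 0 ≤ ε) (hε1 : ε < 1) (w : 𝕜) :
    volume {l : ℝ | l ∈ Set.Icc μ M ∧ ‖(l : 𝕜) ^ K * w - 1‖ < ε}
      ≤ ENNReal.ofReal (M * (((1 + ε) / (1 - ε)) ^ ((1 : ℝ) / K) - 1)) := by
  have hr := one_le_one_add_div_one_sub hε0 hε1
  refine Real.volume_le_of_forall_le_mul (Real.one_le_rpow hr (by positivity))
    (fun x hx => hx.1.2) fun x hx y hy => ?_
  exact (lt_mul_rpow_of_norm_pow_mul_sub_one_lt hK hε1 (hμ.trans hx.1.1) (hμ.trans hy.1.1)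
    hx.2 hy.2).le

end RCLike

theorem summable_rpow_one_div_natCast_sub_one {ι : Type*} {f : ι → ℕ} {r : ℝ} (hr : 1 ≤ r)
    (hf : Summable fun i => (1 : ℝ) / f i) :
    Summable fun i => r ^ ((1 : ℝ) / f i) - 1 := by
  refine Summable.of_nonneg_of_le (fun i => sub_nonneg.2 (Real.one_le_rpow hr (by positivity)))
    (fun i => ?_) (hf.mul_left (r - 1))
  obtain hi | hi := Nat.eq_zero_or_pos (f i)
  · simp [hi]
  have := rpow_one_add_le_one_add_mul_self (s := r - 1) (by linarith) (p := 1 / f i)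
    (by positivity) (div_le_one_of_le₀ (Nat.one_le_cast.2 hi) (Nat.cast_nonneg _))
  rw [add_sub_cancel] at this
  linarith

theorem sub_le_tsum_of_Icc_subset_iUnion {ι : Type*} [Countable ι] {a b : ℝ} {S : ι → Set ℝ}
    {c : ι → ℝ} (hc0 : ∀ i, 0 ≤ c i) (hc : Summable c)
    (hS : ∀ i, volume (S i) ≤ ENNReal.ofReal (c i)) (hcov : Set.Icc a b ⊆ ⋃ i, S i) :
    b - a ≤ ∑' i, c i := by
  refine (ENNReal.ofReal_le_ofReal_iff (tsum_nonneg hc0)).1 ?_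
  calc ENNReal.ofReal (b - a) = volume (Set.Icc a b) := Real.volume_Icc.symm
    _ ≤ ∑' i, volume (S i) := (measure_mono hcov).trans (measure_iUnion_le S)
    _ ≤ ∑' i, ENNReal.ofReal (c i) := ENNReal.tsum_le_tsum hS
    _ = ENNReal.ofReal (∑' i, c i) := (ENNReal.ofReal_tsum_of_nonneg hc0 hc).symm

theorem stmt_17_general (k : ℕ → ℕ) (hkpos : ∀ n, 0 < k n)
    (hsum : Summable (fun n => (1 : ℝ) / k n))
    (μ₀ M₀ : ℝ) (hμ₀ : 1 < μ₀) (hM₀ : μ₀ < M₀)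
    (ε : ℝ) (hε : ε ∈ Set.Ioo (0:ℝ) 1) (w : ℕ → ℂ) (N₀ : ℕ)
    (hN₀ : M₀ * ∑' v : ℕ, (((1 + ε) / (1 - ε)) ^ ((1:ℝ) / k (N₀ + v)) - 1) < M₀ - μ₀) :
    ¬ (Set.Icc μ₀ M₀ ⊆ ⋃ v : ℕ,
      {l : ℝ | l ∈ Set.Icc μ₀ M₀ ∧
        ‖(l : ℂ) ^ k (N₀ + v) * w (N₀ + v) - 1‖ < ε}) := by
  intro hcov
  obtain ⟨hε0, hε1⟩ := hε
  have hr := one_le_one_add_div_one_sub hε0.le hε1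
  have htail : Summable fun v => (1 : ℝ) / k (N₀ + v) := by
    simpa only [add_comm N₀] using (summable_nat_add_iff N₀).2 hsum
  have hlen := sub_le_tsum_of_Icc_subset_iUnion
    (fun v => mul_nonneg (by linarith) (sub_nonneg.2 (Real.one_le_rpow hr (by positivity))))
    ((summable_rpow_one_div_natCast_sub_one hr htail).mul_left M₀)
    (fun v => volume_setOf_norm_pow_mul_sub_one_lt_le (hkpos _).ne' (by linarith) hε0.le hε1 _)
    hcov
  rw [tsum_mul_left] at hlen
  linarith

theorem stmt_17 (k : ℕ → ℕ) (hk : StrictMono k) (hkpos : ∀ n, 0 < k n)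
    (hsum : Summable (fun n => (1 : ℝ) / k n))
    (μ₀ M₀ : ℝ) (hμ₀ : 1 < μ₀) (hM₀ : μ₀ < M₀)
    (ε : ℝ) (hε : ε ∈ Set.Ioo (0:ℝ) 1) (w : ℕ → ℂ) (N₀ : ℕ)
    (hN₀ : M₀ * ∑' v : ℕ, (((1 + ε) / (1 - ε)) ^ ((1:ℝ) / k (N₀ + v)) - 1) < M₀ - μ₀) :
    ¬ (Set.Icc μ₀ M₀ ⊆ ⋃ v : ℕ,
      {l : ℝ | l ∈ Set.Icc μ₀ M₀ ∧
        ‖(l : ℂ) ^ k (N₀ + v) * w (N₀ + v) - 1‖ < ε}) :=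
  stmt_17_general k hkpos hsum μ₀ M₀ hμ₀ hM₀ ε hε w N₀ hN₀
end
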